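/- arXiv:1805.10374 — 16 statements merged into one kernel-verified Lean document; each statement's English description precedes it below -/
import Mathlib

section
/- Let R be an atomic integral domain satisfying the PC condition. Then R is a principal ideal domain. -/
/-!
The PC condition says exactly that two elements without a common nonunit divisor generate the
unit ideal. So an irreducible `p` not dividing `a` is comaximal with `a`, which makes `p` prime,
and an atomic domain whose atoms are prime is a UFD. In a UFD write `x = g * x'`, `y = g * y'`
with `g = gcd x y`; then `x'`, `y'` are comaximal, so `(x, y) = (g)` and the ring is Bézout.
A Bézout UFD is a PID.
-/

theorem isCoprime_iff_span_pair_eq_top {R : Type*} [CommRing R] {x y : R} :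
    IsCoprime x y ↔ Ideal.span {x, y} = ⊤ := by
  rw [Ideal.eq_top_iff_one, Ideal.mem_span_pair, IsCoprime]

theorem IsCoprime.span_pair_mul_left_eq {R : Type*} [CommRing R] {x y : R} (h : IsCoprime x y)
    (d : R) : Ideal.span {d * x, d * y} = Ideal.span {d} := by
  obtain ⟨u, v, huv⟩ := h
  refine le_antisymm ?_ ?_
  · simp only [Ideal.span_le, Set.insert_subset_iff, Set.singleton_subset_iff, SetLike.mem_coe,
      Ideal.mem_span_singleton]
    exact ⟨dvd_mul_right d x, dvd_mul_right d y⟩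
  · rw [Ideal.span_singleton_le_iff_mem, Ideal.mem_span_pair]
    exact ⟨u, v, by linear_combination d * huv⟩

theorem UniqueFactorizationMonoid.of_exists_irreducible_factors {α : Type*}
    [CommMonoidWithZero α] [IsCancelMulZero α]
    (hatomic : ∀ a : α, a ≠ 0 → ¬IsUnit a →
      ∃ s : Multiset α, (∀ x ∈ s, Irreducible x) ∧ s.prod = a)
    (hprime : ∀ p : α, Irreducible p → Prime p) : UniqueFactorizationMonoid α := by
  refine .of_exists_prime_factors fun a ha => ?_
  by_cases hu : IsUnit a
  · exact ⟨0, by simp, by simpa using (associated_one_iff_isUnit.mpr hu).symm⟩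
  · obtain ⟨s, hs, rfl⟩ := hatomic a ha hu
    exact ⟨s, fun x hx => hprime x (hs x hx), .refl _⟩

def PrincipalContainment (R : Type*) [CommRing R] : Prop :=
  ∀ a b : R, Ideal.span {a, b} ≠ (⊤ : Ideal R) →
    ∃ c : R, Ideal.span {a, b} ≤ Ideal.span {c} ∧ Ideal.span ({c} : Set R) ≠ ⊤

namespace PrincipalContainment

variable {R : Type*} [CommRing R]

theorem isCoprime_of_isRelPrime (hPC : PrincipalContainment R) {a b : R} (hab : IsRelPrime a b) :
    IsCoprime a b := by
  by_contra hcop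
  obtain ⟨c, hle, hc⟩ := hPC a b (mt isCoprime_iff_span_pair_eq_top.2 hcop)
  rw [Ideal.span_le, Set.insert_subset_iff, Set.singleton_subset_iff, SetLike.mem_coe,
    SetLike.mem_coe, Ideal.mem_span_singleton, Ideal.mem_span_singleton] at hle
  exact hc (Ideal.span_singleton_eq_top.2 (hab hle.1 hle.2))

theorem prime_of_irreducible (hPC : PrincipalContainment R) {p : R} (hp : Irreducible p) :
    Prime p :=
  ⟨hp.ne_zero, hp.not_isUnit, fun _ _ hab => or_iff_not_imp_left.2 fun ha =>
    (hPC.isCoprime_of_isRelPrime (hp.isRelPrime_iff_not_dvd.2 ha)).dvd_of_dvd_mul_left hab⟩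

theorem isBezout [h : IsGCDMonoid R] (hPC : PrincipalContainment R) : IsBezout R := by
  obtain ⟨_⟩ := h
  refine IsBezout.iff_span_pair_isPrincipal.2 fun x y => ⟨gcd x y, ?_⟩
  obtain ⟨x', y', hx, hy, hunit⟩ := extract_gcd x y
  have hcop := hPC.isCoprime_of_isRelPrime (gcd_isUnit_iff_isRelPrime.1 hunit)
  calc Ideal.span {x, y} = Ideal.span {gcd x y * x', gcd x y * y'} := by rw [← hx, ← hy]
    _ = Ideal.span {gcd x y} := hcop.span_pair_mul_left_eq _

end PrincipalContainment

/-- Let `R` be an atomic integral domain satisfying the PC condition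
(every proper two-generated ideal is contained in a proper principal ideal).
Then `R` is a principal ideal domain. -/
theorem atomic_PC_isPrincipalIdealRing (R : Type*) [CommRing R] [IsDomain R]
    (hatomic : ∀ a : R, a ≠ 0 → ¬IsUnit a →
      ∃ s : Multiset R, (∀ x ∈ s, Irreducible x) ∧ s.prod = a)
    (hPC : ∀ a b : R, Ideal.span {a, b} ≠ (⊤ : Ideal R) →
      ∃ c : R, Ideal.span {a, b} ≤ Ideal.span {c} ∧ Ideal.span ({c} : Set R) ≠ ⊤) :
    IsPrincipalIdealRing R := by
  replace hPC : PrincipalContainment R := hPC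
  have hUFD : UniqueFactorizationMonoid R :=
    .of_exists_irreducible_factors hatomic fun _ => hPC.prime_of_irreducible
  have : IsBezout R := hPC.isBezout
  exact (IsBezout.TFAE.out 2 1).mp hUFD
end

section
/- (Cohn's Theorem) Every atomic Bézout domain is a principal ideal domain. -/
/-- **Cohn's Theorem.** Every atomic Bézout domain
(every two-generated ideal is principal) is a principal ideal domain. -/
theorem atomic_bezout_isPrincipalIdealRing (R : Type*) [CommRing R] [IsDomain R]
    (hatomic : ∀ a : R, a ≠ 0 → ¬IsUnit a →
      ∃ s : Multiset R, (∀ x ∈ s, Irreducible x) ∧ s.prod = a)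
    (hBezout : ∀ a b : R, (Ideal.span {a, b} : Ideal R).IsPrincipal) :
    IsPrincipalIdealRing R := by
  classical
  haveI : IsBezout R := IsBezout.iff_span_pair_isPrincipal.mpr hBezout
  haveI : Nonempty (GCDMonoid R) := ⟨IsBezout.toGCDDomain R⟩
  haveI : UniqueFactorizationMonoid R := by
    refine UniqueFactorizationMonoid.of_exists_prime_factors fun a ha => ?_
    by_cases hu : IsUnit a
    · exact ⟨0, by simp, by simpa using (associated_one_iff_isUnit.mpr hu).symm⟩
    · obtain ⟨s, hs, hprod⟩ := hatomic a ha hu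
      exact ⟨s, fun b hb => (hs b hb).prime, hprod ▸ Associated.refl _⟩
  have h := IsBezout.TFAE (R := R)
  exact (h.out 2 1).mp ‹UniqueFactorizationMonoid R›
end

section
/- (Chinh–Nam) If R is a unique factorization domain in which every maximal ideal is principal, then R is a principal ideal domain. -/
/-! It suffices that prime ideals are principal (`IsPrincipalIdealRing.of_prime`). A nonzero
prime `P` of a UFD contains a prime element `p`; if `P` lies in a proper principal ideal `(m)`,
e.g. a maximal ideal containing it, then `m ∣ p` with `m` a nonunit, so `p ~ m` and
`(p) ⊆ P ⊆ (m) = (p)`. -/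

namespace Ideal

variable {R : Type*} [CommSemiring R]

theorem span_singleton_eq_of_irreducible_mem {p m : R} (hp : Irreducible p)
    (hm : span {m} ≠ ⊤) (hpm : p ∈ span {m}) : span {p} = span {m} := by
  obtain ⟨u, hu⟩ := (hp.dvd_iff.mp (mem_span_singleton.mp hpm)).resolve_left
    (mt span_singleton_eq_top.mpr hm)
  rw [← hu, span_singleton_mul_right_unit u.isUnit]

theorem IsPrime.eq_of_le_of_isPrincipal [UniqueFactorizationMonoid R] {P M : Ideal R}
    (hP : P.IsPrime) (hP₀ : P ≠ ⊥) (hM : M.IsPrincipal) (hMtop : M ≠ ⊤) (hPM : P ≤ M) :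
    P = M := by
  obtain ⟨p, hpP, hp⟩ := hP.exists_mem_prime_of_ne_bot hP₀
  obtain ⟨m, rfl⟩ := hM
  have hpm : span {p} = span {m} :=
    span_singleton_eq_of_irreducible_mem hp.irreducible hMtop (hPM hpP)
  exact le_antisymm hPM (hpm ▸ (span_singleton_le_iff_mem P).mpr hpP : span {m} ≤ P)

end Ideal

theorem ufd_mip_isPrincipalIdealRing_general (R : Type*) [CommRing R]
    [UniqueFactorizationMonoid R]
    (hMIP : ∀ I : Ideal R, I.IsMaximal → I.IsPrincipal) :
    IsPrincipalIdealRing R := by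
  refine IsPrincipalIdealRing.of_prime fun P hP => ?_
  rcases eq_or_ne P ⊥ with rfl | hP₀
  · exact bot_isPrincipal
  obtain ⟨M, hM, hPM⟩ := Ideal.exists_le_maximal P hP.ne_top
  rw [hP.eq_of_le_of_isPrincipal hP₀ (hMIP M hM) hM.ne_top hPM]
  exact hMIP M hM

/-- **Chinh–Nam.** If `R` is a unique factorization domain in which every
maximal ideal is principal, then `R` is a principal ideal domain. -/
theorem ufd_mip_isPrincipalIdealRing (R : Type*) [CommRing R] [IsDomain R]
    [UniqueFactorizationMonoid R]
    (hMIP : ∀ I : Ideal R, I.IsMaximal → I.IsPrincipal) :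
    IsPrincipalIdealRing R :=
  ufd_mip_isPrincipalIdealRing_general R hMIP
end

section
/- Every integral domain satisfying the PC condition is an AP domain, i.e., every irreducible element of a PC domain is prime. -/
/-! If `(p, a)` is the unit ideal, `p` is coprime to `a` and divides `b` whenever it divides `ab`.
Otherwise the PC condition puts `(p, a)` inside a proper principal ideal `(c)`; then `c` is a
non-unit divisor of the irreducible `p`, hence associated to it, and `p ∣ c ∣ a`. -/

theorem isCoprime_of_span_pair_eq_top {R : Type*} [CommSemiring R] {x y : R}
    (h : Ideal.span {x, y} = ⊤) : IsCoprime x y :=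
  Ideal.mem_span_pair.mp (h ▸ Submodule.mem_top : (1 : R) ∈ Ideal.span {x, y})

theorem Irreducible.dvd_of_span_pair_le_span_singleton {R : Type*} [CommSemiring R]
    {p a c : R} (hp : Irreducible p) (hle : Ideal.span {p, a} ≤ Ideal.span {c})
    (hc : Ideal.span {c} ≠ ⊤) : p ∣ a := by
  have hdvd : ∀ x ∈ ({p, a} : Set R), c ∣ x := fun x hx =>
    Ideal.mem_span_singleton.mp (hle (Ideal.subset_span hx))
  have hcp : Associated p c :=
    (hp.dvd_iff.mp (hdvd p (by simp))).resolve_left (mt Ideal.span_singleton_eq_top.mpr hc)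
  exact hcp.dvd.trans (hdvd a (by simp))

theorem pc_domain_is_ap_general (R : Type*) [CommRing R]
    (hPC : ∀ a b : R, Ideal.span {a, b} ≠ (⊤ : Ideal R) →
      ∃ c : R, Ideal.span {a, b} ≤ Ideal.span {c} ∧ Ideal.span ({c} : Set R) ≠ ⊤) :
    ∀ p : R, Irreducible p → Prime p := by
  intro p hp
  refine ⟨hp.ne_zero, hp.not_isUnit, fun a b hab => ?_⟩
  by_cases htop : Ideal.span {p, a} = ⊤
  · exact Or.inr ((isCoprime_of_span_pair_eq_top htop).dvd_of_dvd_mul_left hab)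
  · obtain ⟨c, hle, hc⟩ := hPC p a htop
    exact Or.inl (hp.dvd_of_span_pair_le_span_singleton hle hc)

/-- Every integral domain satisfying the PC condition (every proper
two-generated ideal is contained in a proper principal ideal) is an AP domain, i.e.
every irreducible element is prime. -/
theorem pc_domain_is_ap (R : Type*) [CommRing R] [IsDomain R]
    (hPC : ∀ a b : R, Ideal.span {a, b} ≠ (⊤ : Ideal R) →
      ∃ c : R, Ideal.span {a, b} ≤ Ideal.span {c} ∧ Ideal.span ({c} : Set R) ≠ ⊤) :
    ∀ p : R, Irreducible p → Prime p :=
  pc_domain_is_ap_general R hPC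
end

section
/- The ring R = ℤ + Xℚ[X], i.e., the subring of the polynomial ring ℚ[X] consisting of all polynomials whose constant coefficient is an integer, is a Bézout domain but is not a principal ideal domain. -/
/-!
If `a = d * A` and `b = d * B` with `d = gcd a b` in `ℚ[X]`, the constant terms of `A` and `B`
generate a cyclic subgroup `c ℤ` of `ℚ`, and `C c * d` generates `(a, b)` in `ℤ + Xℚ[X]`: it divides
`a` and `b` there because `A / c` and `B / c` have integer constant terms, and it is a combination
of `a` and `b` because an integer relation `A(0) x + B(0) y = c` lifts, by coprimality of `A`
and `B`, to a relation `A s + B t = c` with `s(0) = x`, `t(0) = y`.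

The ideal `Xℚ[X]` is not principal: it contains `g / 2` with each of its elements `g`, and
`g / 2 = z * g` with `g ≠ 0` would force `z = 1 / 2`, whose constant term is not an integer.
-/

/-- The subring `ℤ + Xℚ[X]` of `ℚ[X]`: polynomials with integer constant term. -/
noncomputable def ZplusXQX : Subring (Polynomial ℚ) where
  carrier := {p : Polynomial ℚ | ∃ n : ℤ, p.coeff 0 = (n : ℚ)}
  zero_mem' := ⟨0, by simp⟩
  one_mem' := ⟨1, by simp⟩
  add_mem' := fun {p q} hp hq => by
    obtain ⟨m, hm⟩ := hp; obtain ⟨n, hn⟩ := hq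
    exact ⟨m + n, by simp [hm, hn]⟩
  mul_mem' := fun {p q} hp hq => by
    obtain ⟨m, hm⟩ := hp; obtain ⟨n, hn⟩ := hq
    exact ⟨m * n, by simp [Polynomial.mul_coeff_zero, hm, hn]⟩
  neg_mem' := fun {p} hp => by
    obtain ⟨n, hn⟩ := hp
    exact ⟨-n, by simp [hn]⟩

open Polynomial
open scoped nonZeroDivisors

theorem Submodule.isPrincipal_span_pair_of_isFractionRing {R K : Type*} [CommRing R] [IsDomain R]
    [IsPrincipalIdealRing R] [Field K] [Algebra R K] [IsFractionRing R K] (p q : K) :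
    (Submodule.span R {p, q}).IsPrincipal := by
  have := FractionalIdeal.isPrincipal
    (FractionalIdeal.spanSingleton R⁰ p + FractionalIdeal.spanSingleton R⁰ q)
  rwa [FractionalIdeal.coe_add, FractionalIdeal.coe_spanSingleton,
    FractionalIdeal.coe_spanSingleton, Submodule.add_eq_sup, ← Submodule.span_union,
    Set.singleton_union] at this

theorem Ideal.isPrincipal_span_pair_of_dvd_of_mem {R : Type*} [CommRing R] {a b h : R}
    (ha : h ∣ a) (hb : h ∣ b) (hh : h ∈ Ideal.span {a, b}) : (Ideal.span {a, b}).IsPrincipal :=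
  ⟨⟨h, le_antisymm
    (Ideal.span_le.2 <| Set.pair_subset (Ideal.mem_span_singleton.2 ha)
      (Ideal.mem_span_singleton.2 hb))
    ((Ideal.span_singleton_le_iff_mem _).2 hh)⟩⟩

theorem Polynomial.exists_mul_add_mul_eq_of_isCoprime {R : Type*} [CommRing R] {A B : R[X]}
    (hAB : IsCoprime A B) (c : R[X]) {x y : R} (h : A.coeff 0 * x + B.coeff 0 * y = c.coeff 0) :
    ∃ s t : R[X], s.coeff 0 = x ∧ t.coeff 0 = y ∧ A * s + B * t = c := by
  obtain ⟨u, v, huv⟩ := hAB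
  set w := c - (A * C x + B * C y)
  have hw : w.coeff 0 = 0 := by simp [w, mul_coeff_zero, h]
  refine ⟨C x + w * u, C y + w * v, by simp [mul_coeff_zero, hw],
    by simp [mul_coeff_zero, hw], ?_⟩
  linear_combination w * huv

namespace ZplusXQX

theorem mem_of_coeff_zero_eq_zero {p : ℚ[X]} (hp : p.coeff 0 = 0) : p ∈ ZplusXQX :=
  ⟨0, by simp [hp]⟩

theorem C_inv_two_notMem : C (2⁻¹ : ℚ) ∉ ZplusXQX := by
  rintro ⟨n, hn⟩
  rw [coeff_C_zero] at hn
  have : (2 * n : ℤ) = 1 := by exact_mod_cast (by rw [← hn]; norm_num : (2 : ℚ) * n = 1)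
  omega

theorem dvd_of_mul_eq_C_mul {a h : ZplusXQX} {A : ℚ[X]} {c : ℚ} {m : ℤ} (hc : c ≠ 0)
    (hA : A.coeff 0 = m * c) (heq : (h : ℚ[X]) * A = C c * a) : h ∣ a := by
  refine ⟨⟨C c⁻¹ * A, m, by
    rw [mul_coeff_zero, coeff_C_zero, hA, mul_left_comm, inv_mul_cancel₀ hc, mul_one]⟩,
    Subtype.ext ?_⟩
  calc (a : ℚ[X]) = C c⁻¹ * (C c * a) := by
        rw [← mul_assoc, ← C_mul, inv_mul_cancel₀ hc, C_1, one_mul]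
    _ = h * (C c⁻¹ * A) := by rw [← heq]; ring

theorem exists_dvd_dvd_mem_span_pair (a b : ZplusXQX) (hb : b ≠ 0) :
    ∃ h : ZplusXQX, h ∣ a ∧ h ∣ b ∧ h ∈ Ideal.span {a, b} := by
  have hb' : (b : ℚ[X]) ≠ 0 := fun h => hb (Subtype.ext h)
  set d := GCDMonoid.gcd (a : ℚ[X]) b
  have hd : d ≠ 0 := gcd_ne_zero_of_right hb'
  set A := (a : ℚ[X]) / d
  set B := (b : ℚ[X]) / d
  have hAB : IsCoprime A B := isCoprime_div_gcd_div_gcd hb'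
  have hdA : d * A = a := EuclideanDomain.mul_div_cancel' hd (gcd_dvd_left _ _)
  have hdB : d * B = b := EuclideanDomain.mul_div_cancel' hd (gcd_dvd_right _ _)
  obtain ⟨⟨c, hc⟩⟩ :=
    Submodule.isPrincipal_span_pair_of_isFractionRing (R := ℤ) (A.coeff 0) (B.coeff 0)
  obtain ⟨x, y, hxy⟩ := Submodule.mem_span_pair.1 (hc ▸ Submodule.mem_span_singleton_self c)
  obtain ⟨m, hm⟩ := Submodule.mem_span_singleton.1 (hc ▸ Submodule.subset_span (by simp) :
    A.coeff 0 ∈ Submodule.span ℤ {c})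
  obtain ⟨n, hn⟩ := Submodule.mem_span_singleton.1 (hc ▸ Submodule.subset_span (by simp) :
    B.coeff 0 ∈ Submodule.span ℤ {c})
  rw [zsmul_eq_mul] at hm hn
  have hc0 : c ≠ 0 := by
    rintro rfl
    have := hAB.map constantCoeff
    simp [← hm, ← hn] at this
  obtain ⟨s, t, hs, ht, hst⟩ := exists_mul_add_mul_eq_of_isCoprime hAB (C c) (x := x) (y := y)
    (by simpa [zsmul_eq_mul, mul_comm] using hxy)
  set h : ZplusXQX := ⟨s, x, hs⟩ * a + ⟨t, y, ht⟩ * b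
  have hh : (h : ℚ[X]) = C c * d := by
    simp only [h, Subring.coe_add, Subring.coe_mul]
    rw [← hdA, ← hdB, ← hst]
    ring
  refine ⟨h, dvd_of_mul_eq_C_mul hc0 hm.symm ?_, dvd_of_mul_eq_C_mul hc0 hn.symm ?_,
    Ideal.mem_span_pair.2 ⟨_, _, rfl⟩⟩
  · rw [hh, ← hdA]; ring
  · rw [hh, ← hdB]; ring

theorem isPrincipal_span_pair (a b : ZplusXQX) : (Ideal.span {a, b}).IsPrincipal := by
  rcases eq_or_ne b 0 with rfl | hb
  · exact Ideal.isPrincipal_span_pair_of_dvd_of_mem dvd_rfl (dvd_zero a)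
      (Ideal.subset_span (by simp))
  · obtain ⟨h, ha, hb, hh⟩ := exists_dvd_dvd_mem_span_pair a b hb
    exact Ideal.isPrincipal_span_pair_of_dvd_of_mem ha hb hh

theorem not_isPrincipal_ker_constantCoeff :
    ¬(RingHom.ker (constantCoeff.comp ZplusXQX.subtype)).IsPrincipal := by
  rintro ⟨g, hI⟩
  have mem_ker (f : ZplusXQX) :
      f ∈ RingHom.ker (constantCoeff.comp ZplusXQX.subtype) ↔ (f : ℚ[X]).coeff 0 = 0 := by
    simp
  have hg0 : (g : ℚ[X]).coeff 0 = 0 := (mem_ker g).1 (hI ▸ Ideal.mem_span_singleton_self g)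
  have hg : (g : ℚ[X]) ≠ 0 := by
    intro hg
    have hX := (mem_ker ⟨X, mem_of_coeff_zero_eq_zero coeff_X_zero⟩).2 coeff_X_zero
    rw [hI, (Subtype.ext hg : g = 0), Submodule.span_singleton_eq_bot.2 rfl, Ideal.mem_bot] at hX
    exact X_ne_zero (congrArg Subtype.val hX)
  have hhalf : C 2⁻¹ * (g : ℚ[X]) ∈ ZplusXQX :=
    mem_of_coeff_zero_eq_zero (by simp [mul_coeff_zero, hg0])
  obtain ⟨z, hz⟩ := Ideal.mem_span_singleton'.1
    (hI ▸ (mem_ker ⟨_, hhalf⟩).2 (by simp [mul_coeff_zero, hg0]))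
  have hz' : (z : ℚ[X]) = C 2⁻¹ := mul_right_cancel₀ hg (congrArg Subtype.val hz)
  exact C_inv_two_notMem (hz' ▸ z.2)

end ZplusXQX

/-- The ring `R = ℤ + Xℚ[X]` (the subring of `ℚ[X]` of polynomials whose
constant coefficient is an integer) is a Bézout domain (every two-generated ideal is
principal) but is not a principal ideal domain. -/
theorem ZplusXQX_bezout_not_pid :
    IsDomain ZplusXQX ∧
    (∀ a b : ZplusXQX, (Ideal.span {a, b} : Ideal ZplusXQX).IsPrincipal) ∧
    ¬IsPrincipalIdealRing ZplusXQX :=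
  ⟨inferInstance, ZplusXQX.isPrincipal_span_pair,
    fun h => ZplusXQX.not_isPrincipal_ker_constantCoeff (h.principal _)⟩
end

section
/- Let F be a field, let R = F[X; ℚ≥0] be the additive monoid ring of the monoid of nonnegative rationals over F, let m be the maximal ideal of R consisting of all elements with zero constant term, and let D = R_m be the localization of R at m. Then D is a Bézout domain. -/
open scoped Classical

/-- The "constant term" homomorphism of a monoid algebra `F[X; M]`, for a monoid `M` in
which `a + b = 0` forces `a = b = 0`; it sends `a₁X^{α₁} + ⋯ + aₙX^{αₙ}` to its
coefficient at the identity `0` of `M` (see `constantTermHom_apply`). -/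
noncomputable def constantTermHom (F M : Type*) [Field F] [AddCommMonoid M]
    (hM : ∀ a b : M, a + b = 0 → a = 0 ∧ b = 0) : AddMonoidAlgebra F M →ₐ[F] F :=
  AddMonoidAlgebra.lift F F M
    { toFun := fun a => if a.toAdd = 0 then 1 else 0
      map_one' := by simp
      map_mul' := fun a b => by
        rcases em (a.toAdd = 0) with ha | ha
        · rcases em (b.toAdd = 0) with hb | hb
          · simp [ha, hb]
          · have h : a.toAdd + b.toAdd ≠ 0 := fun h => hb (hM _ _ h).2
            simp [ha, hb, toAdd_mul, h]
        · have h : a.toAdd + b.toAdd ≠ 0 := fun h => ha (hM _ _ h).1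
          simp [ha, toAdd_mul, h] }

theorem constantTermHom_apply (F M : Type*) [Field F] [AddCommMonoid M]
    (hM : ∀ a b : M, a + b = 0 → a = 0 ∧ b = 0) (f : AddMonoidAlgebra F M) :
    constantTermHom F M hM f = f.coeff 0 := by
  classical
  rw [constantTermHom, AddMonoidAlgebra.lift_apply]
  simp only [MonoidHom.coe_mk, OneHom.coe_mk, toAdd_ofAdd, smul_eq_mul, mul_ite, mul_one,
    mul_zero]
  rw [Finsupp.sum_ite_eq' f.coeff 0 (fun _ b => b)]
  split
  · rfl
  · next h => exact (Finsupp.notMem_support_iff.mp h).symm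

/-- The augmentation ideal of the monoid algebra `F[X; M]`, consisting of all elements
with zero constant term (zero coefficient at the identity of `M`). -/
noncomputable def augIdeal (F M : Type*) [Field F] [AddCommMonoid M]
    (hM : ∀ a b : M, a + b = 0 → a = 0 ∧ b = 0) : Ideal (AddMonoidAlgebra F M) :=
  RingHom.ker (constantTermHom F M hM)

theorem mem_augIdeal_iff (F M : Type*) [Field F] [AddCommMonoid M]
    (hM : ∀ a b : M, a + b = 0 → a = 0 ∧ b = 0) (f : AddMonoidAlgebra F M) :
    f ∈ augIdeal F M hM ↔ f.coeff 0 = 0 := by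
  rw [augIdeal, RingHom.mem_ker, constantTermHom_apply]

/-- The augmentation ideal is a maximal ideal. -/
instance augIdeal_isMaximal (F M : Type*) [Field F] [AddCommMonoid M]
    {hM : ∀ a b : M, a + b = 0 → a = 0 ∧ b = 0} : (augIdeal F M hM).IsMaximal :=
  RingHom.ker_isMaximal_of_surjective _ (fun c =>
    ⟨AddMonoidAlgebra.single 0 c, by simp [constantTermHom]⟩)

theorem nnrat_pos_monoid : ∀ a b : ℚ≥0, a + b = 0 → a = 0 ∧ b = 0 :=
  fun _ _ h => add_eq_zero.mp h

/-! Every nonzero `f ∈ F[X; M]` factors as `X^α * g` with `α` its least exponent and `g ∉ m`,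
so `g` becomes a unit in `D = F[X; M]_m`. Hence every nonzero element of `D` is associated to a
monomial `X^α`, and since the exponents are totally ordered, any two elements of `D` are
comparable under divisibility: `D` is a valuation ring, hence a Bézout domain. -/

namespace AddMonoidAlgebra

variable {R M : Type*} [Semiring R]

theorem of'_dvd_of' [AddMonoid M] [LE M] [ExistsAddOfLE M] {α β : M} (h : α ≤ β) :
    of' R M α ∣ of' R M β := by
  obtain ⟨γ, rfl⟩ := exists_add_of_le h
  exact ⟨of' R M γ, by simp [of'_apply, single_mul_single]⟩

variable [AddCommMonoid M]

theorem modOf_eq_zero_of_forall_le [LE M] [ExistsAddOfLE M] {x : R[M]} {α : M}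
    (h : ∀ β ∈ x.coeff.support, α ≤ β) : x.modOf α = 0 := by
  ext β
  by_cases hβ : ∃ d, β = α + d
  · exact coeff_modOf_of_exists_add x α β hβ
  · rw [coeff_modOf_of_not_exists_add x α β hβ]
    exact Finsupp.notMem_support_iff.mp fun hx => hβ (exists_add_of_le (h β hx))

theorem exists_eq_of'_mul_coeff_zero_ne_zero [LinearOrder M] [ExistsAddOfLE M] [IsCancelAdd M]
    {f : R[M]} (hf : f ≠ 0) : ∃ (α : M) (g : R[M]), g.coeff 0 ≠ 0 ∧ f = of' R M α * g := by
  have hsupp : f.coeff.support.Nonempty := Finsupp.support_nonempty_iff.mpr (by simpa using hf)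
  set α := f.coeff.support.min' hsupp
  refine ⟨α, f.divOf α, by simpa using f.coeff.support.min'_mem hsupp, ?_⟩
  have hmod : f.modOf α = 0 := modOf_eq_zero_of_forall_le f.coeff.support.min'_le
  rw [← add_zero (of' R M α * _), ← hmod, divOf_add_modOf]

end AddMonoidAlgebra

section

open AddMonoidAlgebra

variable {F M : Type*} [Field F] [AddCommMonoid M] [LinearOrder M] [IsOrderedCancelAddMonoid M]
  [CanonicallyOrderedAdd M] {hM : ∀ a b : M, a + b = 0 → a = 0 ∧ b = 0}

theorem exists_associated_algebraMap_of' {a : Localization.AtPrime (augIdeal F M hM)}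
    (ha : a ≠ 0) : ∃ α : M, Associated (algebraMap _ _ (of' F M α)) a := by
  obtain ⟨⟨f, s⟩, rfl⟩ := IsLocalization.mk'_surjective (augIdeal F M hM).primeCompl a
  have hf : f ≠ 0 := by
    rintro rfl
    exact ha (IsLocalization.mk'_zero s)
  obtain ⟨α, g, hg0, rfl⟩ := exists_eq_of'_mul_coeff_zero_ne_zero hf
  have hg : g ∈ (augIdeal F M hM).primeCompl := mt (mem_augIdeal_iff F M hM g).mp hg0
  have h₁ : Associated (algebraMap _ (Localization.AtPrime (augIdeal F M hM)) (of' F M α))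
      (algebraMap _ _ (of' F M α * g)) := by
    rw [map_mul]
    exact associated_mul_unit_right _ _ (IsLocalization.map_units _ ⟨g, hg⟩)
  have h₂ : Associated (algebraMap _ (Localization.AtPrime (augIdeal F M hM)) (of' F M α * g))
      (IsLocalization.mk' _ (of' F M α * g) s) := by
    rw [← IsLocalization.mk'_spec _ _ s]
    exact (associated_mul_unit_right _ _ (IsLocalization.map_units _ s)).symm
  exact ⟨α, h₁.trans h₂⟩

instance valuationRing_localizationAtPrime_augIdeal :
    ValuationRing (Localization.AtPrime (augIdeal F M hM)) := by
  refine ValuationRing.iff_dvd_total.mpr ⟨fun a b => ?_⟩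
  rcases eq_or_ne a 0 with rfl | ha
  · exact .inr (dvd_zero b)
  rcases eq_or_ne b 0 with rfl | hb
  · exact .inl (dvd_zero a)
  obtain ⟨α, hα⟩ := exists_associated_algebraMap_of' ha
  obtain ⟨β, hβ⟩ := exists_associated_algebraMap_of' hb
  rw [← hα.dvd_iff_dvd_left, ← hβ.dvd_iff_dvd_right, ← hα.dvd_iff_dvd_right,
    ← hβ.dvd_iff_dvd_left]
  exact (le_total α β).imp (map_dvd _ <| of'_dvd_of' ·) (map_dvd _ <| of'_dvd_of' ·)

end

/-- Let `F` be a field, `R = F[X; ℚ≥0]` the monoid ring of the additive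
monoid of nonnegative rationals, `m` its maximal ideal of elements with zero constant
term, and `D = R_m` the localization of `R` at `m`. Then `D` is a Bézout domain: every
ideal of `D` generated by two elements is principal. -/
theorem localization_monoidAlgebra_nnrat_bezout (F : Type*) [Field F] :
    IsDomain (Localization.AtPrime (augIdeal F ℚ≥0 nnrat_pos_monoid)) ∧
    ∀ a b : Localization.AtPrime (augIdeal F ℚ≥0 nnrat_pos_monoid),
      (Ideal.span {a, b} : Ideal (Localization.AtPrime (augIdeal F ℚ≥0 nnrat_pos_monoid))).IsPrincipal :=
  ⟨inferInstance, IsBezout.span_pair_isPrincipal⟩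
end

section
/- Let F be a field, let R = F[X; ℚ≥0] be the additive monoid ring of the monoid of nonnegative rationals over F, let m be the maximal ideal of R consisting of all elements with zero constant term, and let D = R_m be the localization of R at m. Then the maximal ideal mR_m of D is not finitely generated; in particular D does not satisfy the MIP condition. -/
open scoped Classical

/- Every monomial `X^α` with `α > 0` is the square `X^{α/2} X^{α/2}`, so `m = m²`.
Hence the maximal ideal of the local domain `R_m` is idempotent and nonzero, and by Nakayama
an idempotent finitely generated ideal of a local domain is `0` or the whole ring. -/

theorem Localization.AtPrime.not_fg_maximalIdeal {R : Type*} [CommRing R] [IsDomain R]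
    (P : Ideal R) [P.IsPrime] (hP : P ≠ ⊥) (hidem : IsIdempotentElem P) :
    ¬(IsLocalRing.maximalIdeal (Localization.AtPrime P)).FG := by
  intro hfg
  have hidem' : IsIdempotentElem (IsLocalRing.maximalIdeal (Localization.AtPrime P)) := by
    rw [← Localization.AtPrime.map_eq_maximalIdeal, IsIdempotentElem, ← Ideal.map_mul,
      hidem.eq]
  rcases (Ideal.isIdempotentElem_iff_eq_bot_or_top _ hfg).mp hidem' with hbot | htop
  · exact hP <| by
      rw [← Localization.AtPrime.under_maximalIdeal (I := P), hbot, Ideal.under_bot]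
  · exact (IsLocalRing.maximalIdeal.isMaximal _).ne_top htop

section AugmentationIdeal

variable {F M : Type*} [Field F] [AddCommMonoid M] {hM : ∀ a b : M, a + b = 0 → a = 0 ∧ b = 0}

theorem single_mem_augIdeal {a : M} (ha : a ≠ 0) (c : F) :
    AddMonoidAlgebra.single a c ∈ augIdeal F M hM := by
  simp [mem_augIdeal_iff, AddMonoidAlgebra.coeff_single, ha]

theorem augIdeal_ne_bot {a : M} (ha : a ≠ 0) : augIdeal F M hM ≠ ⊥ :=
  (Submodule.ne_bot_iff _).mpr
    ⟨_, single_mem_augIdeal ha 1, by simp [AddMonoidAlgebra.single_eq_zero]⟩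

theorem isIdempotentElem_augIdeal (hhalf : ∀ a : M, ∃ b, b + b = a) :
    IsIdempotentElem (augIdeal F M hM) := by
  refine le_antisymm Ideal.mul_le_right fun f hf => ?_
  rw [← AddMonoidAlgebra.sum_coeff_single f]
  refine Ideal.sum_mem _ fun a ha => ?_
  have ha0 : a ≠ 0 := by
    rintro rfl
    exact Finsupp.mem_support_iff.mp ha ((mem_augIdeal_iff F M hM f).mp hf)
  obtain ⟨b, rfl⟩ := hhalf a
  have hb0 : b ≠ 0 := by
    rintro rfl
    exact ha0 (add_zero 0)
  rw [show AddMonoidAlgebra.single (b + b) (f.coeff (b + b)) =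
      AddMonoidAlgebra.single b (f.coeff (b + b)) * AddMonoidAlgebra.single b 1 by
    rw [AddMonoidAlgebra.single_mul_single, mul_one]]
  exact Ideal.mul_mem_mul (single_mem_augIdeal hb0 _) (single_mem_augIdeal hb0 _)

end AugmentationIdeal

/-- Let `F` be a field, `R = F[X; ℚ≥0]` the monoid ring of the additive
monoid of nonnegative rationals, `m` its maximal ideal of elements with zero constant
term, and `D = R_m`. Then the maximal ideal `mR_m` of `D` is not finitely generated;
in particular `D` does not satisfy the MIP condition (not every maximal ideal of `D`
is principal). -/
theorem localization_monoidAlgebra_nnrat_not_mip (F : Type*) [Field F] :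
    ¬(Ideal.map (algebraMap (AddMonoidAlgebra F ℚ≥0)
        (Localization.AtPrime (augIdeal F ℚ≥0 nnrat_pos_monoid)))
        (augIdeal F ℚ≥0 nnrat_pos_monoid)).FG ∧
    ¬(∀ I : Ideal (Localization.AtPrime (augIdeal F ℚ≥0 nnrat_pos_monoid)),
        I.IsMaximal → I.IsPrincipal) := by
  have hnfg := Localization.AtPrime.not_fg_maximalIdeal (augIdeal F ℚ≥0 nnrat_pos_monoid)
    (augIdeal_ne_bot one_ne_zero)
    (isIdempotentElem_augIdeal fun a => ⟨a / 2, add_halves a⟩)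
  rw [Localization.AtPrime.map_eq_maximalIdeal]
  exact ⟨hnfg, fun h => hnfg (h _ (IsLocalRing.maximalIdeal.isMaximal _)).fg⟩
end

section
/- There exists a Bézout domain which does not satisfy the MIP condition, i.e., a Bézout domain having a maximal ideal that is not principal. -/
/-!
Every valuation ring is Bézout. If the maximal ideal of the valuation ring of `v` were generated
by `π`, then `v π` would be the largest value below `1`; this is impossible when the value group
is densely ordered and every value is attained. Both hold for the `orderTop` valuation on the
field of Hahn series with rational coefficients and rational exponents.
-/

open IsLocalRing

theorem Valuation.not_isPrincipal_maximalIdeal_valuationSubring {K Γ₀ : Type*} [Field K]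
    [LinearOrderedCommGroupWithZero Γ₀] [DenselyOrdered Γ₀] (v : Valuation K Γ₀)
    (hv : Function.Surjective v) : ¬ (maximalIdeal v.valuationSubring).IsPrincipal := by
  rintro ⟨π, hπ⟩
  have hπ_lt_one : v π < 1 := v.isEquiv_valuation_valuationSubring.lt_one_iff_lt_one.2 <|
    (ValuationSubring.valuation_lt_one_iff _ π).1 (hπ ▸ Ideal.mem_span_singleton_self π)
  obtain ⟨γ, hπγ, hγ⟩ := exists_between hπ_lt_one
  obtain ⟨y, rfl⟩ := hv γ
  have hy : (⟨y, hγ.le⟩ : v.valuationSubring) ∈ maximalIdeal v.valuationSubring :=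
    (ValuationSubring.valuation_lt_one_iff _ _).2 <|
      v.isEquiv_valuation_valuationSubring.lt_one_iff_lt_one.1 hγ
  obtain ⟨c, hc⟩ := Ideal.mem_span_singleton'.1 (hπ ▸ hy)
  have hyπ : v y ≤ v π := by
    rw [← show (c : K) * π = y from congrArg Subtype.val hc, map_mul]
    exact mul_le_of_le_one_left' c.2
  exact hyπ.not_gt hπγ

theorem AddValuation.toValuation_surjective {R Γ₀ : Type*} [Ring R]
    [LinearOrderedAddCommMonoidWithTop Γ₀] {v : AddValuation R Γ₀}
    (hv : Function.Surjective v) : Function.Surjective v.toValuation := fun γ => by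
  obtain ⟨r, hr⟩ := hv (OrderDual.ofDual γ.toAdd)
  exact ⟨r, by rw [AddValuation.toValuation_apply, hr]; rfl⟩

theorem HahnSeries.addVal_surjective (Γ R : Type*) [AddCancelCommMonoid Γ] [LinearOrder Γ]
    [IsOrderedCancelAddMonoid Γ] [Ring R] [IsDomain R] :
    Function.Surjective (HahnSeries.addVal Γ R) := by
  intro t
  induction t using WithTop.recTopCoe with
  | top => exact ⟨0, AddValuation.map_zero _⟩
  | coe g =>
    exact ⟨HahnSeries.single g 1, by
      rw [HahnSeries.addVal_apply, HahnSeries.orderTop_single one_ne_zero]⟩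

/-- There exists a Bézout domain (every two-generated ideal is principal)
which does not satisfy the MIP condition, i.e. it has a maximal ideal that is not
principal. -/
theorem exists_bezout_not_mip : ∃ (R : Type) (_ : CommRing R) (_ : IsDomain R),
    (∀ a b : R, (Ideal.span {a, b} : Ideal R).IsPrincipal) ∧
    ∃ I : Ideal R, I.IsMaximal ∧ ¬I.IsPrincipal := by
  let v := (HahnSeries.addVal ℚ ℚ).toValuation
  refine ⟨v.valuationSubring, inferInstance, inferInstance, IsBezout.span_pair_isPrincipal,
    maximalIdeal _, inferInstance, ?_⟩
  exact v.not_isPrincipal_maximalIdeal_valuationSubring <|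
    AddValuation.toValuation_surjective (HahnSeries.addVal_surjective ℚ ℚ)
end

section
/- There exists an AP domain which does not satisfy the PC condition. -/
/-! In a UFD such as `ℤ[X]` every atom is prime, so it suffices to find a proper ideal `(p, b)`
with `p` an atom not dividing `b`: a principal ideal `(c)` containing it has `c ∣ p`, so `c` is
either a unit or an associate of `p`, and the latter would force `p ∣ b`. In `ℤ[X]` take `(X, 2)`,
which is proper because it lies in the kernel of `f ↦ f(0) mod 2`. -/

open Polynomial

theorem Irreducible.not_exists_proper_span_singleton_ge {R : Type*} [CommRing R] {p b : R}
    (hp : Irreducible p) (hb : ¬p ∣ b) :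
    ¬∃ c : R, Ideal.span {p, b} ≤ Ideal.span {c} ∧ Ideal.span ({c} : Set R) ≠ ⊤ := by
  rintro ⟨c, hle, hne⟩
  have hcp : c ∣ p := Ideal.mem_span_singleton.mp (hle (Ideal.subset_span (by simp)))
  have hcb : c ∣ b := Ideal.mem_span_singleton.mp (hle (Ideal.subset_span (by simp)))
  obtain ⟨q, rfl⟩ := hcp
  rcases hp.isUnit_or_isUnit rfl with hc | hq
  · exact hne (Ideal.span_singleton_eq_top.mpr hc)
  · exact hb ((Associated.symm ⟨hq.unit, rfl⟩).dvd.trans hcb)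

theorem Polynomial.span_X_two_ne_top : Ideal.span {X, 2} ≠ (⊤ : Ideal ℤ[X]) := by
  let f : ℤ[X] →+* ZMod 2 := (Int.castRingHom (ZMod 2)).comp (evalRingHom 0)
  have hle : Ideal.span {X, 2} ≤ RingHom.ker f := by
    rw [Ideal.span_le, Set.insert_subset_iff, Set.singleton_subset_iff]
    exact ⟨by simp [f], by simp [f]; decide⟩
  exact ne_top_of_le_ne_top (RingHom.ker_ne_top f) hle

theorem Polynomial.not_X_dvd_two : ¬(X : ℤ[X]) ∣ 2 := by
  rw [X_dvd_iff]
  simp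

/-- There exists an AP domain (every irreducible element is prime)
which does not satisfy the PC condition (every proper two-generated ideal is contained
in a proper principal ideal). -/
theorem exists_ap_not_pc : ∃ (R : Type) (_ : CommRing R) (_ : IsDomain R),
    (∀ p : R, Irreducible p → Prime p) ∧
    ¬(∀ a b : R, Ideal.span {a, b} ≠ (⊤ : Ideal R) →
      ∃ c : R, Ideal.span {a, b} ≤ Ideal.span {c} ∧ Ideal.span ({c} : Set R) ≠ ⊤) := by
  refine ⟨ℤ[X], inferInstance, inferInstance, fun _ hp => hp.prime, fun hpc => ?_⟩
  exact irreducible_X.not_exists_proper_span_singleton_ge not_X_dvd_two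
    (hpc X 2 span_X_two_ne_top)
end

section
/- Let i be an irrational real number with 0 < i < 1, let q be a rational number with 19 < q < 20, let M = ([0, 5 + i/2] ∩ ℚ) ∪ (5 + i/2, ∞) regarded as an additive submonoid of the nonnegative reals, and let r be a rational number with 10 < r < 10 + i. Then there do not exist elements α, β, α′, β′ ∈ M satisfying simultaneously α + β = 10 + i, α + α′ = r, and β + β′ = q − r. -/
/-- The set `M = ([0, 5 + i/2] ∩ ℚ) ∪ (5 + i/2, ∞)` of nonnegative reals. -/
def Mcarrier (i : ℝ) : Set ℝ :=
  (Set.Icc (0 : ℝ) (5 + i / 2) ∩ Set.range ((↑) : ℚ → ℝ)) ∪ Set.Ioi (5 + i / 2)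

/-!
`10 + i` is irrational, so one of `α, β` is irrational. Its partner (`α'` or `β'`) then
differs from a rational number by an irrational one, so it is irrational too. Irrational
elements of `M` exceed `5 + i/2`, hence that pair sums to more than `10 + i`, which is too
much for `r < 10 + i` as well as for `q - r < 20 - 10`.
-/

theorem Irrational.lt_of_mem_Mcarrier {i x : ℝ} (hx : x ∈ Mcarrier i) (hirr : Irrational x) :
    5 + i / 2 < x := by
  rcases hx with ⟨-, s, rfl⟩ | hx
  · exact absurd hirr (Rat.not_irrational s)
  · exact hx

theorem lt_ratCast_of_add_eq_of_irrational {i x y : ℝ} {s : ℚ} (hx : x ∈ Mcarrier i)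
    (hy : y ∈ Mcarrier i) (hirr : Irrational x) (hxy : x + y = s) : 10 + i < s := by
  have hy_irr : Irrational y := by
    simpa [← hxy] using hirr.ratCast_sub s
  linarith [hirr.lt_of_mem_Mcarrier hx, hy_irr.lt_of_mem_Mcarrier hy]

theorem no_decomposition_general (i : ℝ) (hi : Irrational i)
    (q : ℚ) (hq2 : (q : ℝ) < 20)
    (r : ℚ) (hr1 : 10 < (r : ℝ)) (hr2 : (r : ℝ) < 10 + i) :
    ¬∃ α β α' β' : ℝ, α ∈ Mcarrier i ∧ β ∈ Mcarrier i ∧ α' ∈ Mcarrier i ∧ β' ∈ Mcarrier i ∧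
      α + β = 10 + i ∧ α + α' = (r : ℝ) ∧ β + β' = (q : ℝ) - (r : ℝ) := by
  rintro ⟨α, β, α', β', hα, hβ, hα', hβ', hsum, hA, hB⟩
  have h_irr : Irrational (α + β) := by
    simpa [hsum] using hi.ratCast_add 10
  rcases h_irr.add_cases with hα_irr | hβ_irr
  · linarith [lt_ratCast_of_add_eq_of_irrational hα hα' hα_irr hA]
  · have h := lt_ratCast_of_add_eq_of_irrational (s := q - r) hβ hβ' hβ_irr (by push_cast; exact hB)
    push_cast at h
    linarith

/-- Let `i` be an irrational real with `0 < i < 1`, let `q` be rational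
with `19 < q < 20`, let `M = ([0, 5 + i/2] ∩ ℚ) ∪ (5 + i/2, ∞)`, and let `r` be rational
with `10 < r < 10 + i`. Then there are no `α, β, α', β' ∈ M` with `α + β = 10 + i`,
`α + α' = r` and `β + β' = q - r`. -/
theorem no_decomposition (i : ℝ) (hi : Irrational i) (hi0 : 0 < i) (hi1 : i < 1)
    (q : ℚ) (hq1 : 19 < (q : ℝ)) (hq2 : (q : ℝ) < 20)
    (r : ℚ) (hr1 : 10 < (r : ℝ)) (hr2 : (r : ℝ) < 10 + i) :
    ¬∃ α β α' β' : ℝ, α ∈ Mcarrier i ∧ β ∈ Mcarrier i ∧ α' ∈ Mcarrier i ∧ β' ∈ Mcarrier i ∧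
      α + β = 10 + i ∧ α + α' = (r : ℝ) ∧ β + β' = (q : ℝ) - (r : ℝ) :=
  no_decomposition_general i hi q hq2 r hr1 hr2
end

section
/- Let i be an irrational real number with 0 < i < 1, let q be a rational number with 19 < q < 20, let r be a rational number with 10 < r < 10 + i, let M = ([0, 5 + i/2] ∩ ℚ) ∪ (5 + i/2, ∞) regarded as an additive submonoid of the nonnegative reals, let F be a field, let R = F[X; M] be the monoid ring, let m be its maximal ideal of elements with zero constant term, and let D = R_m. Then in D the element X^{10+i} divides the product X^r · X^{q−r}, but there do not exist y, z ∈ D with y·z = X^{10+i}, y dividing X^r, and z dividing X^{q−r}; in particular the element X^{10+i} of D is not primal and D is not a pre-Schreier domain. -/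
open scoped Classical

theorem Mcarrier.nonneg {i : ℝ} (hi0 : 0 < i) {x : ℝ} (hx : x ∈ Mcarrier i) : 0 ≤ x := by
  rcases hx with ⟨⟨h1, _⟩, _⟩ | h
  · exact h1
  · have : (0 : ℝ) < 5 + i / 2 := by linarith
    exact le_of_lt (lt_trans this h)

theorem Mcarrier.add_mem {i : ℝ} (hi0 : 0 < i) {a b : ℝ}
    (ha : a ∈ Mcarrier i) (hb : b ∈ Mcarrier i) : a + b ∈ Mcarrier i := by
  rcases ha with ⟨⟨ha1, ha2⟩, ⟨p, hp⟩⟩ | ha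
  · rcases hb with ⟨⟨hb1, hb2⟩, ⟨s, hs⟩⟩ | hb
    · rcases lt_or_ge (5 + i / 2) (a + b) with h | h
      · exact Or.inr h
      · exact Or.inl ⟨⟨by linarith, h⟩, ⟨p + s, by push_cast [hp, hs]; ring⟩⟩
    · exact Or.inr (by simp only [Set.mem_Ioi] at hb ⊢; linarith)
  · have hb0 : 0 ≤ b := Mcarrier.nonneg hi0 hb
    exact Or.inr (by simp only [Set.mem_Ioi] at ha ⊢; linarith)

/-- `M` as an additive submonoid of the reals. -/
def Msubmonoid (i : ℝ) (hi0 : 0 < i) : AddSubmonoid ℝ where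
  carrier := Mcarrier i
  zero_mem' := Or.inl ⟨⟨le_refl 0, by linarith⟩, ⟨0, by norm_num⟩⟩
  add_mem' := fun ha hb => Mcarrier.add_mem hi0 ha hb

theorem Msubmonoid_pos_monoid (i : ℝ) (hi0 : 0 < i) :
    ∀ a b : Msubmonoid i hi0, a + b = 0 → a = 0 ∧ b = 0 := fun a b h => by
  have hs : (a : ℝ) + (b : ℝ) = 0 := by
    have := congrArg Subtype.val h
    push_cast at this
    exact this
  have ha := Mcarrier.nonneg hi0 a.2
  have hb := Mcarrier.nonneg hi0 b.2
  refine ⟨Subtype.ext ?_, Subtype.ext ?_⟩ <;>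
    simp only [ZeroMemClass.coe_zero] <;> linarith

theorem mem_M_ten_add (i : ℝ) (hi0 : 0 < i) : 10 + i ∈ Msubmonoid i hi0 := by
  have h : 10 + i ∈ Set.Ioi (5 + i / 2) := by simp only [Set.mem_Ioi]; linarith
  exact Or.inr h

theorem mem_M_r (i : ℝ) (hi0 : 0 < i) (hi1 : i < 1) (r : ℚ) (hr1 : 10 < (r : ℝ)) :
    (r : ℝ) ∈ Msubmonoid i hi0 := by
  have h : (r : ℝ) ∈ Set.Ioi (5 + i / 2) := by simp only [Set.mem_Ioi]; linarith
  exact Or.inr h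

theorem mem_M_qr (i : ℝ) (hi0 : 0 < i) (hi1 : i < 1) (q r : ℚ) (hq1 : 19 < (q : ℝ))
    (hr2 : (r : ℝ) < 10 + i) : (q : ℝ) - (r : ℝ) ∈ Msubmonoid i hi0 := by
  have h : (q : ℝ) - (r : ℝ) ∈ Set.Ioi (5 + i / 2) := by simp only [Set.mem_Ioi]; linarith
  exact Or.inr h

/-- The image in `D = R_m` of the monomial `X^α` of `R = F[X; M]`. -/
noncomputable def monoM (i : ℝ) (hi0 : 0 < i) (F : Type*) [Field F] (α : ℝ)
    (hα : α ∈ Msubmonoid i hi0) :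
    Localization.AtPrime (augIdeal F (Msubmonoid i hi0) (Msubmonoid_pos_monoid i hi0)) :=
  algebraMap (AddMonoidAlgebra F (Msubmonoid i hi0))
    (Localization.AtPrime (augIdeal F (Msubmonoid i hi0) (Msubmonoid_pos_monoid i hi0)))
    (AddMonoidAlgebra.single (⟨α, hα⟩ : Msubmonoid i hi0) (1 : F))

/-! The lowest exponent `ord` of an element of `F[X; M]` is additive and vanishes outside `m`, so
it turns `y z = X^{10+i}`, `y ∣ X^r`, `z ∣ X^{q-r}` in `D` into `a + b = 10 + i`, `a + c = r`,
`b + d = q - r` with `a, b, c, d ∈ M`. One of `a`, `b` is irrational; since `M` is rational below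
`5 + i/2`, that summand and its partner in the rational sum `r` resp. `q - r` both exceed
`5 + i/2`, forcing `r > 10 + i` or `q - r > 10 + i`. -/

namespace AddMonoidAlgebra

variable {F N : Type*} [Field F] [AddCommMonoid N] [LinearOrder N]

theorem uniqueAdd_min' [IsOrderedCancelAddMonoid N] {A B : Finset N} (hA : A.Nonempty)
    (hB : B.Nonempty) :
    UniqueAdd A B (A.min' hA) (B.min' hB) := fun _ _ ha hb h =>
  ((add_eq_add_iff_eq_and_eq (A.min'_le _ ha) (B.min'_le _ hb)).1 h.symm).imp Eq.symm Eq.symm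

/-- The lowest exponent occurring in `f`, with junk value `0` at `f = 0`. -/
noncomputable def ord (f : AddMonoidAlgebra F N) : N :=
  if hf : f = 0 then 0
  else f.coeff.support.min' (Finsupp.support_nonempty_iff.2 (mt coeff_eq_zero.1 hf))

theorem ord_eq_min' {f : AddMonoidAlgebra F N} (hf : f ≠ 0) :
    ord f = f.coeff.support.min' (Finsupp.support_nonempty_iff.2 (mt coeff_eq_zero.1 hf)) :=
  dif_neg hf

theorem coeff_ord_ne_zero {f : AddMonoidAlgebra F N} (hf : f ≠ 0) : f.coeff (ord f) ≠ 0 := by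
  rw [← Finsupp.mem_support_iff, ord_eq_min' hf]
  exact Finset.min'_mem _ _

theorem ord_le {f : AddMonoidAlgebra F N} {a : N} (ha : f.coeff a ≠ 0) : ord f ≤ a := by
  have hf : f ≠ 0 := by rintro rfl; exact ha rfl
  rw [ord_eq_min' hf]
  exact Finset.min'_le _ _ (Finsupp.mem_support_iff.2 ha)

theorem coeff_mul_ord_add_ord [IsOrderedCancelAddMonoid N] {f g : AddMonoidAlgebra F N}
    (hf : f ≠ 0) (hg : g ≠ 0) :
    (f * g).coeff (ord f + ord g) = f.coeff (ord f) * g.coeff (ord g) := by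
  rw [ord_eq_min' hf, ord_eq_min' hg]
  exact coeff_mul_add_of_uniqueAdd (uniqueAdd_min' _ _)

theorem ord_mul [IsOrderedCancelAddMonoid N] {f g : AddMonoidAlgebra F N} (hf : f ≠ 0)
    (hg : g ≠ 0) :
    ord (f * g) = ord f + ord g := by
  classical
  refine le_antisymm (ord_le ?_) ?_
  · rw [coeff_mul_ord_add_ord hf hg]
    exact mul_ne_zero (coeff_ord_ne_zero hf) (coeff_ord_ne_zero hg)
  · have hmem := support_coeff_mul_subset f g
      (Finsupp.mem_support_iff.2 (coeff_ord_ne_zero (mul_ne_zero hf hg)))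
    obtain ⟨a, ha, b, hb, hab⟩ := Finset.mem_add.1 hmem
    rw [← hab]
    exact add_le_add (ord_le (Finsupp.mem_support_iff.1 ha))
      (ord_le (Finsupp.mem_support_iff.1 hb))

theorem ord_single (a : N) {c : F} (hc : c ≠ 0) : ord (single a c) = a := by
  classical
  have h := coeff_ord_ne_zero (f := single a c) (by simpa using hc)
  rw [coeff_single, Finsupp.single_apply] at h
  by_contra hne
  exact h (if_neg (Ne.symm hne))

theorem ord_eq_zero_of_coeff_zero_ne_zero (hN : ∀ x : N, 0 ≤ x) {f : AddMonoidAlgebra F N}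
    (hf : f.coeff 0 ≠ 0) : ord f = 0 :=
  le_antisymm (ord_le hf) (hN _)

variable {hM : ∀ a b : N, a + b = 0 → a = 0 ∧ b = 0}

theorem ord_eq_zero_of_mem_primeCompl (hN : ∀ x : N, 0 ≤ x) {s : AddMonoidAlgebra F N}
    (hs : s ∈ (augIdeal F N hM).primeCompl) : ord s = 0 :=
  ord_eq_zero_of_coeff_zero_ne_zero hN fun h => hs ((mem_augIdeal_iff F N hM s).2 h)

theorem ord_add_ord_of_mk'_mul_mk'_eq [IsOrderedCancelAddMonoid N] (hN : ∀ x : N, 0 ≤ x)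
    {D : Type*} [CommRing D] [Algebra (AddMonoidAlgebra F N) D]
    [IsLocalization.AtPrime D (augIdeal F N hM)] {f g : AddMonoidAlgebra F N}
    {s t : (augIdeal F N hM).primeCompl} {α : N}
    (h : IsLocalization.mk' D f s * IsLocalization.mk' D g t = algebraMap _ D (single α (1 : F))) :
    ord f + ord g = α := by
  have hst : ((s * t : (augIdeal F N hM).primeCompl) : AddMonoidAlgebra F N) ≠ 0 :=
    fun h0 => (s * t).2 (h0 ▸ Ideal.zero_mem _)
  have hα : single α (1 : F) ≠ 0 := by simp
  have hfg : f * g = single α (1 : F) * (s * t : (augIdeal F N hM).primeCompl) := by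
    rw [← IsLocalization.mk'_mul, IsLocalization.mk'_eq_iff_eq_mul, ← map_mul] at h
    exact IsLocalization.injective D (augIdeal F N hM).primeCompl_le_nonZeroDivisors h
  have hf : f ≠ 0 := left_ne_zero_of_mul (hfg ▸ mul_ne_zero hα hst)
  have hg : g ≠ 0 := right_ne_zero_of_mul (hfg ▸ mul_ne_zero hα hst)
  have hord := congrArg ord hfg
  rwa [ord_mul hf hg, ord_mul hα hst, ord_single α one_ne_zero,
    ord_eq_zero_of_mem_primeCompl hN (s * t).2, add_zero] at hord

end AddMonoidAlgebra

namespace Mcarrier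

variable {i x y : ℝ}

theorem lt_of_irrational (hx : x ∈ Mcarrier i) (hirr : Irrational x) : 5 + i / 2 < x := by
  rcases hx with ⟨-, hrat⟩ | hlt
  · exact absurd hrat hirr
  · exact hlt

theorem lt_add_of_irrational (hx : x ∈ Mcarrier i) (hy : y ∈ Mcarrier i) {p : ℚ}
    (hxy : x + y = p) (hirr : Irrational x) : 10 + i < x + y := by
  have hy' : Irrational y := by
    rw [show y = p - x by linarith]
    exact hirr.ratCast_sub p
  linarith [lt_of_irrational hx hirr, lt_of_irrational hy hy']

theorem false_of_add_eq (hi : Irrational i) {q r : ℚ} (hq2 : (q : ℝ) < 20)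
    (hr1 : 10 < (r : ℝ)) (hr2 : (r : ℝ) < 10 + i) {a b c d : ℝ} (ha : a ∈ Mcarrier i)
    (hb : b ∈ Mcarrier i) (hc : c ∈ Mcarrier i) (hd : d ∈ Mcarrier i) (hab : a + b = 10 + i)
    (hac : a + c = r) (hbd : b + d = (q : ℝ) - r) : False := by
  have hirr : Irrational (a + b) := hab ▸ hi.natCast_add 10
  rcases hirr.add_cases with ha' | hb'
  · linarith [lt_add_of_irrational ha hc hac ha']
  · have hbd' : b + d = ((q - r : ℚ) : ℝ) := by push_cast; exact hbd
    linarith [lt_add_of_irrational hb hd hbd' hb']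

end Mcarrier

section Monomials

variable {i : ℝ} {hi0 : 0 < i} {F : Type*} [Field F]

theorem monoM_mul_monoM {α β : ℝ} (hα : α ∈ Msubmonoid i hi0)
    (hβ : β ∈ Msubmonoid i hi0) :
    monoM i hi0 F α hα * monoM i hi0 F β hβ = monoM i hi0 F (α + β) (add_mem hα hβ) := by
  rw [monoM, monoM, monoM, ← map_mul, AddMonoidAlgebra.single_mul_single, one_mul]
  rfl

theorem monoM_congr {α β : ℝ} (h : α = β) (hα : α ∈ Msubmonoid i hi0)
    (hβ : β ∈ Msubmonoid i hi0) : monoM i hi0 F α hα = monoM i hi0 F β hβ := by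
  subst h
  rfl

end Monomials

theorem monoM_ten_add_dvd_mul {i : ℝ} (hi0 : 0 < i) (hi1 : i < 1) {q r : ℚ}
    (hq1 : 19 < (q : ℝ)) (hr1 : 10 < (r : ℝ)) (hr2 : (r : ℝ) < 10 + i) (F : Type*) [Field F] :
    monoM i hi0 F (10 + i) (mem_M_ten_add i hi0) ∣
      monoM i hi0 F r (mem_M_r i hi0 hi1 r hr1) *
      monoM i hi0 F ((q : ℝ) - (r : ℝ)) (mem_M_qr i hi0 hi1 q r hq1 hr2) := by
  have hquot : (q : ℝ) - 10 - i ∈ Msubmonoid i hi0 :=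
    Or.inr (by simp only [Set.mem_Ioi]; linarith)
  refine ⟨monoM i hi0 F _ hquot, ?_⟩
  rw [monoM_mul_monoM, monoM_mul_monoM]
  exact monoM_congr (by ring) _ _

open AddMonoidAlgebra in
theorem not_exists_mul_eq_monoM_ten_add {i : ℝ} (hi : Irrational i) (hi0 : 0 < i) (hi1 : i < 1)
    {q r : ℚ} (hq1 : 19 < (q : ℝ)) (hq2 : (q : ℝ) < 20) (hr1 : 10 < (r : ℝ))
    (hr2 : (r : ℝ) < 10 + i) (F : Type*) [Field F] :
    ¬∃ y z : Localization.AtPrime (augIdeal F (Msubmonoid i hi0) (Msubmonoid_pos_monoid i hi0)),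
      y * z = monoM i hi0 F (10 + i) (mem_M_ten_add i hi0) ∧
      y ∣ monoM i hi0 F r (mem_M_r i hi0 hi1 r hr1) ∧
      z ∣ monoM i hi0 F ((q : ℝ) - (r : ℝ)) (mem_M_qr i hi0 hi1 q r hq1 hr2) := by
  set m := augIdeal F (Msubmonoid i hi0) (Msubmonoid_pos_monoid i hi0)
  rintro ⟨y, z, hyz, ⟨c, hc⟩, ⟨d, hd⟩⟩
  obtain ⟨⟨f, s⟩, rfl⟩ := IsLocalization.mk'_surjective m.primeCompl y
  obtain ⟨⟨g, t⟩, rfl⟩ := IsLocalization.mk'_surjective m.primeCompl z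
  obtain ⟨⟨h, u⟩, rfl⟩ := IsLocalization.mk'_surjective m.primeCompl c
  obtain ⟨⟨k, v⟩, rfl⟩ := IsLocalization.mk'_surjective m.primeCompl d
  have hN : ∀ x : Msubmonoid i hi0, 0 ≤ x := fun x => Mcarrier.nonneg hi0 x.2
  have hfg := congrArg Subtype.val (ord_add_ord_of_mk'_mul_mk'_eq hN hyz)
  have hfh := congrArg Subtype.val (ord_add_ord_of_mk'_mul_mk'_eq hN hc.symm)
  have hgk := congrArg Subtype.val (ord_add_ord_of_mk'_mul_mk'_eq hN hd.symm)
  exact Mcarrier.false_of_add_eq hi hq2 hr1 hr2 (ord f).2 (ord g).2 (ord h).2 (ord k).2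
    hfg hfh hgk

/-- With `i` irrational, `0 < i < 1`, `q ∈ ℚ`, `19 < q < 20`, `r ∈ ℚ`,
`10 < r < 10 + i`, `M = ([0, 5 + i/2] ∩ ℚ) ∪ (5 + i/2, ∞)`, `F` a field, `R = F[X; M]`,
`m` its maximal ideal of elements with zero constant term and `D = R_m`: in `D` the
element `X^{10+i}` divides `X^r · X^{q-r}`, but there are no `y, z ∈ D` with
`y·z = X^{10+i}`, `y ∣ X^r` and `z ∣ X^{q-r}`; in particular `X^{10+i}` is not primal
in `D` and `D` is not a pre-Schreier domain. -/
theorem localization_monoidAlgebra_M_not_preSchreier (i : ℝ) (hi : Irrational i)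
    (hi0 : 0 < i) (hi1 : i < 1) (q : ℚ) (hq1 : 19 < (q : ℝ)) (hq2 : (q : ℝ) < 20)
    (r : ℚ) (hr1 : 10 < (r : ℝ)) (hr2 : (r : ℝ) < 10 + i) (F : Type*) [Field F] :
    (monoM i hi0 F (10 + i) (mem_M_ten_add i hi0) ∣
      monoM i hi0 F r (mem_M_r i hi0 hi1 r hr1) *
      monoM i hi0 F ((q : ℝ) - (r : ℝ)) (mem_M_qr i hi0 hi1 q r hq1 hr2)) ∧
    (¬∃ y z : Localization.AtPrime
        (augIdeal F (Msubmonoid i hi0) (Msubmonoid_pos_monoid i hi0)),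
      y * z = monoM i hi0 F (10 + i) (mem_M_ten_add i hi0) ∧
      y ∣ monoM i hi0 F r (mem_M_r i hi0 hi1 r hr1) ∧
      z ∣ monoM i hi0 F ((q : ℝ) - (r : ℝ)) (mem_M_qr i hi0 hi1 q r hq1 hr2)) ∧
    ¬IsPrimal (monoM i hi0 F (10 + i) (mem_M_ten_add i hi0)) ∧
    ¬(∀ c : Localization.AtPrime
        (augIdeal F (Msubmonoid i hi0) (Msubmonoid_pos_monoid i hi0)), IsPrimal c) := by
  have hdvd := monoM_ten_add_dvd_mul hi0 hi1 hq1 hr1 hr2 F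
  have hnot := not_exists_mul_eq_monoM_ten_add hi hi0 hi1 hq1 hq2 hr1 hr2 F
  have hprimal : ¬IsPrimal (monoM i hi0 F (10 + i) (mem_M_ten_add i hi0)) := fun hp =>
    let ⟨y, z, hy, hz, hyz⟩ := hp hdvd
    hnot ⟨y, z, hyz.symm, hy, hz⟩
  exact ⟨hdvd, hnot, hprimal, fun h => hprimal (h _)⟩
end

section
/- Let i be an irrational real number with 0 < i < 1, let M = ([0, 5 + i/2] ∩ ℚ) ∪ (5 + i/2, ∞) regarded as an additive submonoid of the nonnegative reals, let F be a field, let R = F[X; M] be the monoid ring, let m be its maximal ideal of elements with zero constant term, and let D = R_m. Then the maximal ideal mR_m of D is not finitely generated; in particular D does not satisfy the MIP condition. -/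
open scoped Classical

/-!
Elements of the augmentation ideal `m` of `F[X; M]` have only positive exponents, so finitely many
of them lie in `I_q = {f | supp f ⊆ (q, ∞)}` for some `q ∈ M`, `q > 0`, small enough: `M` contains
the rationals in `[0, 1]`, so it has no least positive element. If `m R_m` were finitely generated,
it would thus lie in `I_q R_m`. But `X^q ∈ m` is not in `I_q R_m`: for `s ∉ m` the coefficient of
`s X^q` at `q` is `s(0) ≠ 0`.
-/

theorem Ideal.exists_finset_map_span_eq_of_fg_map {R S : Type*} [CommSemiring R] [Semiring S]
    (f : R →+* S) {I : Ideal R} (h : (I.map f).FG) :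
    ∃ T : Finset R, (T : Set R) ⊆ I ∧ (Ideal.span (T : Set R)).map f = I.map f := by
  classical
  obtain ⟨V, hV, hspan⟩ := (Submodule.fg_span_iff_fg_span_finset_subset _).mp h
  obtain ⟨T, hT, rfl⟩ := Finset.subset_set_image_iff.mp hV
  refine ⟨T, hT, ?_⟩
  rw [Ideal.map_span, ← Finset.coe_image]
  exact hspan.symm

theorem Finset.exists_pos_forall_lt {M : Type*} [Zero M] [LinearOrder M] [Nontrivial M]
    (hnonneg : ∀ x : M, 0 ≤ x) (hsmall : ∀ δ : M, 0 < δ → ∃ q, 0 < q ∧ q < δ) (U : Finset M)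
    (hU : ∀ x ∈ U, 0 < x) :
    ∃ q : M, 0 < q ∧ ∀ x ∈ U, q < x := by
  obtain ⟨x₀, hx₀⟩ := exists_ne (0 : M)
  have hpos : ∀ x ∈ insert x₀ U, 0 < x := by
    simpa only [Finset.forall_mem_insert] using ⟨(hnonneg x₀).lt_of_ne' hx₀, hU⟩
  obtain ⟨q, hq0, hqd⟩ := hsmall _ (hpos _ (Finset.min'_mem _ (Finset.insert_nonempty x₀ U)))
  exact ⟨q, hq0, fun x hx => hqd.trans_le (Finset.min'_le _ _ (Finset.mem_insert_of_mem hx))⟩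

namespace AddMonoidAlgebra

variable {F M : Type*} [Field F] [AddCommMonoid M] [LinearOrder M]
  {hM : ∀ a b : M, a + b = 0 → a = 0 ∧ b = 0}

theorem pos_of_mem_support_of_mem_augIdeal (hnonneg : ∀ x : M, 0 ≤ x)
    {f : AddMonoidAlgebra F M} (hf : f ∈ augIdeal F M hM) {x : M} (hx : x ∈ f.coeff.support) :
    0 < x := by
  refine (hnonneg x).lt_of_ne' fun hx0 => ?_
  rw [hx0, Finsupp.mem_support_iff] at hx
  exact hx ((mem_augIdeal_iff F M hM f).mp hf)

variable [IsOrderedCancelAddMonoid M]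

def supportGtIdeal (hnonneg : ∀ x : M, 0 ≤ x) (q : M) : Ideal (AddMonoidAlgebra F M) where
  carrier := {f | ∀ x ∈ f.coeff.support, q < x}
  zero_mem' := by simp
  add_mem' {f g} hf hg x hx := by
    rcases Finset.mem_union.mp (Finsupp.support_add hx) with h | h
    exacts [hf x h, hg x h]
  smul_mem' c f hf x hx := by
    obtain ⟨a, -, b, hb, rfl⟩ := Finset.mem_add.mp (support_coeff_mul_subset c f hx)
    exact lt_add_of_nonneg_of_lt (hnonneg a) (hf b hb)

theorem mem_supportGtIdeal {hnonneg : ∀ x : M, 0 ≤ x} {q : M} {f : AddMonoidAlgebra F M} :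
    f ∈ supportGtIdeal hnonneg q ↔ ∀ x ∈ f.coeff.support, q < x :=
  Iff.rfl

theorem exists_pos_span_le_supportGtIdeal [Nontrivial M] (hnonneg : ∀ x : M, 0 ≤ x)
    (hsmall : ∀ δ : M, 0 < δ → ∃ q, 0 < q ∧ q < δ) (T : Finset (AddMonoidAlgebra F M))
    (hT : (T : Set (AddMonoidAlgebra F M)) ⊆ augIdeal F M hM) :
    ∃ q : M, 0 < q ∧ Ideal.span (T : Set (AddMonoidAlgebra F M)) ≤ supportGtIdeal hnonneg q := by
  classical
  obtain ⟨q, hq0, hq⟩ :=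
    Finset.exists_pos_forall_lt hnonneg hsmall (T.biUnion fun f => f.coeff.support) (by
      simp only [Finset.mem_biUnion]
      rintro x ⟨f, hf, hx⟩
      exact pos_of_mem_support_of_mem_augIdeal hnonneg (hT hf) hx)
  refine ⟨q, hq0, Ideal.span_le.mpr fun f hf x hx => hq x ?_⟩
  exact Finset.mem_biUnion.mpr ⟨f, hf, hx⟩

theorem algebraMap_single_notMem_map_supportGtIdeal (hnonneg : ∀ x : M, 0 ≤ x) (q : M) :
    algebraMap _ (Localization.AtPrime (augIdeal F M hM)) (single q (1 : F)) ∉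
      (supportGtIdeal (F := F) hnonneg q).map (algebraMap _ _) := by
  rw [IsLocalization.algebraMap_mem_map_algebraMap_iff (augIdeal F M hM).primeCompl]
  rintro ⟨s, hs, hsq⟩
  have hcoeff : (s * single q 1).coeff q = s.coeff 0 := by
    simpa using coeff_mul_single_add s (1 : F) q 0
  have hq_mem : q ∈ (s * single q 1).coeff.support := by
    rw [Finsupp.mem_support_iff, hcoeff]
    exact fun h => hs ((mem_augIdeal_iff F M hM s).mpr h)
  exact lt_irrefl q (mem_supportGtIdeal.mp hsq q hq_mem)

theorem not_fg_map_augIdeal [Nontrivial M] (hnonneg : ∀ x : M, 0 ≤ x)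
    (hsmall : ∀ δ : M, 0 < δ → ∃ q, 0 < q ∧ q < δ) :
    ¬((augIdeal F M hM).map (algebraMap _ (Localization.AtPrime (augIdeal F M hM)))).FG := by
  intro hfg
  obtain ⟨T, hTm, hT⟩ := Ideal.exists_finset_map_span_eq_of_fg_map _ hfg
  obtain ⟨q, hq0, hTq⟩ := exists_pos_span_le_supportGtIdeal hnonneg hsmall T hTm
  have hq_mem : single q (1 : F) ∈ augIdeal F M hM := by
    rw [mem_augIdeal_iff]
    exact Finsupp.single_eq_of_ne' hq0.ne'
  apply algebraMap_single_notMem_map_supportGtIdeal (F := F) (hM := hM) hnonneg q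
  refine Ideal.map_mono hTq ?_
  rw [hT]
  exact Ideal.mem_map_of_mem _ hq_mem

end AddMonoidAlgebra

namespace Msubmonoid

variable {i : ℝ} {hi0 : 0 < i}

theorem coe_nonneg (x : Msubmonoid i hi0) : 0 ≤ x :=
  Mcarrier.nonneg hi0 x.2

theorem ratCast_mem {r : ℚ} (hr0 : 0 ≤ r) (hr1 : r ≤ 1) : (r : ℝ) ∈ Msubmonoid i hi0 :=
  have hr1' : (r : ℝ) ≤ 1 := mod_cast hr1
  Or.inl ⟨⟨mod_cast hr0, by linarith⟩, r, rfl⟩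

instance : Nontrivial (Msubmonoid i hi0) :=
  ⟨⟨0, ⟨1, by simpa using ratCast_mem (i := i) (hi0 := hi0) zero_le_one le_rfl⟩, by
    simp [Subtype.ext_iff]⟩⟩

theorem exists_pos_lt (δ : Msubmonoid i hi0) (hδ : 0 < δ) :
    ∃ q : Msubmonoid i hi0, 0 < q ∧ q < δ := by
  obtain ⟨r, hr0, hrδ⟩ := exists_rat_btwn (lt_min (show (0 : ℝ) < δ from hδ) one_pos)
  exact ⟨⟨r, ratCast_mem (mod_cast hr0.le) (mod_cast (hrδ.trans_le (min_le_right _ _)).le)⟩,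
    hr0, hrδ.trans_le (min_le_left _ _)⟩

end Msubmonoid

theorem localization_monoidAlgebra_M_not_mip_general (i : ℝ) (hi0 : 0 < i) (F : Type*) [Field F] :
    ¬(Ideal.map (algebraMap (AddMonoidAlgebra F (Msubmonoid i hi0))
        (Localization.AtPrime (augIdeal F (Msubmonoid i hi0) (Msubmonoid_pos_monoid i hi0))))
        (augIdeal F (Msubmonoid i hi0) (Msubmonoid_pos_monoid i hi0))).FG ∧
    ¬(∀ I : Ideal (Localization.AtPrime
        (augIdeal F (Msubmonoid i hi0) (Msubmonoid_pos_monoid i hi0))),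
        I.IsMaximal → I.IsPrincipal) := by
  have hfg := AddMonoidAlgebra.not_fg_map_augIdeal (F := F) (hM := Msubmonoid_pos_monoid i hi0)
    Msubmonoid.coe_nonneg Msubmonoid.exists_pos_lt
  exact ⟨hfg, fun hmip => hfg (hmip _ (IsLocalization.AtPrime.isMaximal_map _ _)).fg⟩

/-- Let `i` be an irrational real with `0 < i < 1`, let
`M = ([0, 5 + i/2] ∩ ℚ) ∪ (5 + i/2, ∞)` as an additive submonoid of the nonnegative
reals, let `F` be a field, `R = F[X; M]` the monoid ring, `m` its maximal ideal of
elements with zero constant term, and `D = R_m`. Then the maximal ideal `mR_m` of `D` is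
not finitely generated; in particular `D` does not satisfy the MIP condition. -/
theorem localization_monoidAlgebra_M_not_mip (i : ℝ) (hi : Irrational i) (hi0 : 0 < i)
    (hi1 : i < 1) (F : Type*) [Field F] :
    ¬(Ideal.map (algebraMap (AddMonoidAlgebra F (Msubmonoid i hi0))
        (Localization.AtPrime (augIdeal F (Msubmonoid i hi0) (Msubmonoid_pos_monoid i hi0))))
        (augIdeal F (Msubmonoid i hi0) (Msubmonoid_pos_monoid i hi0))).FG ∧
    ¬(∀ I : Ideal (Localization.AtPrime
        (augIdeal F (Msubmonoid i hi0) (Msubmonoid_pos_monoid i hi0))),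
        I.IsMaximal → I.IsPrincipal) :=
  localization_monoidAlgebra_M_not_mip_general i hi0 F
end

section
/- There exists an integral domain satisfying the PC condition which is neither a pre-Schreier domain (hence not a Bézout domain) nor satisfies the MIP condition. -/
/-!
Take `R = {f ∈ ℂ⟦t^ℚ⟧ : f has nonnegative support and real coefficients at exponents ≤ 1}` and
let `ν` be the `t`-adic valuation. The units of `R` are the series with `ν = 0`, so `R` is local
with maximal ideal `{ν > 0}`; as `ℚ` has no least positive element this ideal is not principal,
while any two nonunits are both divisible by `t^γ` for small rational `γ > 0`, which gives PC.
Finally `t²` divides `(i t^{3/2})²`, but in a factorization `t² = c₁c₂` with `cᵢ ∣ i t^{3/2}` both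
`cᵢ` have order `> 1`: a factorization of `i t^{3/2}` into two factors of order `≤ 1` would have
real leading coefficients with product `i`. Complex conjugation may be replaced by any field
endomorphism `σ`, and `i` by any `z` with `σ z ≠ z` and `σ (z * z) = z * z`.
-/

open HahnSeries

theorem exists_span_pair_le_span_singleton_ne_top {R : Type*} [CommRing R]
    (h : ∀ a b : R, ¬IsUnit a → ¬IsUnit b → ∃ c, ¬IsUnit c ∧ c ∣ a ∧ c ∣ b) (a b : R)
    (hab : Ideal.span {a, b} ≠ ⊤) :
    ∃ c : R, Ideal.span {a, b} ≤ Ideal.span {c} ∧ Ideal.span {c} ≠ ⊤ := by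
  have hunit {x : R} (hx : x ∈ ({a, b} : Set R)) : ¬IsUnit x := fun hu ↦
    hab (Ideal.eq_top_of_isUnit_mem _ (Ideal.subset_span hx) hu)
  obtain ⟨c, hc, hca, hcb⟩ := h a b (hunit (by simp)) (hunit (by simp))
  refine ⟨c, ?_, by rwa [Ne, Ideal.span_singleton_eq_top]⟩
  rw [Ideal.span_le, Set.pair_subset_iff]
  exact ⟨Ideal.mem_span_singleton.mpr hca, Ideal.mem_span_singleton.mpr hcb⟩

noncomputable section

namespace HahnSeries

def mapRingHom {Γ R S : Type*} [AddCommMonoid Γ] [PartialOrder Γ] [IsOrderedCancelAddMonoid Γ]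
    [Semiring R] [Semiring S] (f : R →+* S) : R⟦Γ⟧ →+* S⟦Γ⟧ where
  toFun x := x.map f
  map_one' := HahnSeries.map_one f.toMonoidWithZeroHom
  map_mul' _ _ := HahnSeries.map_mul (f : R →ₙ+* S)
  map_zero' := HahnSeries.map_zero (f : ZeroHom R S)
  map_add' _ _ := HahnSeries.map_add (f : R →+ S)

@[simp]
theorem coeff_mapRingHom {Γ R S : Type*} [AddCommMonoid Γ] [PartialOrder Γ]
    [IsOrderedCancelAddMonoid Γ] [Semiring R] [Semiring S] (f : R →+* S) (x : R⟦Γ⟧) (g : Γ) :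
    (mapRingHom f x).coeff g = f (x.coeff g) := rfl

@[simp]
theorem mapRingHom_single {Γ R S : Type*} [AddCommMonoid Γ] [PartialOrder Γ]
    [IsOrderedCancelAddMonoid Γ] [Semiring R] [Semiring S] (f : R →+* S) (a : Γ) (r : R) :
    mapRingHom f (single a r) = single a (f r) :=
  HahnSeries.map_single (f : ZeroHom R S)

theorem coe_le_addVal_single {Γ R : Type*} [AddCancelCommMonoid Γ] [LinearOrder Γ]
    [IsOrderedCancelAddMonoid Γ] [Ring R] [IsDomain R] (g : Γ) (r : R) :
    (g : WithTop Γ) ≤ addVal Γ R (single g r) := by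
  rw [addVal_apply]
  exact orderTop_single_le

end HahnSeries

variable {K : Type*} [Field K] (σ : K →+* K)

local notation "ν" => addVal ℚ K

/-- The condition `1 < ν (f - mapRingHom σ f)` says that the coefficients of `f` at exponents
`≤ 1` are fixed by `σ`. -/
def fixedUpToOne : Subring K⟦ℚ⟧ where
  carrier := {f | 0 ≤ ν f ∧ 1 < ν (f - mapRingHom σ f)}
  zero_mem' := by simp
  one_mem' := by simp
  add_mem' {f g} hf hg := by
    refine ⟨(ν).map_le_add hf.1 hg.1, ?_⟩
    rw [map_add, add_sub_add_comm]
    exact (ν).map_lt_add hf.2 hg.2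
  neg_mem' {f} hf := by
    refine ⟨((ν).map_neg f).symm ▸ hf.1, ?_⟩
    rw [map_neg, neg_sub_neg, AddValuation.map_sub_swap]
    exact hf.2
  mul_mem' {f g} hf hg := by
    have hσg : 0 ≤ ν (mapRingHom σ g) := by
      simpa using (ν).map_le_sub hg.1 (hg.2.le.trans' zero_le_one)
    refine ⟨by simpa [(ν).map_mul] using add_nonneg hf.1 hg.1, ?_⟩
    have hsplit : f * g - mapRingHom σ (f * g) =
        f * (g - mapRingHom σ g) + (f - mapRingHom σ f) * mapRingHom σ g := by
      rw [map_mul]; ring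
    rw [hsplit]
    refine (ν).map_lt_add ?_ ?_ <;> rw [(ν).map_mul]
    · exact hg.2.trans_le (le_add_of_nonneg_left hf.1)
    · exact hf.2.trans_le (le_add_of_nonneg_right hσg)

namespace fixedUpToOne

variable {σ}

theorem addVal_nonneg (f : fixedUpToOne σ) : 0 ≤ ν f := f.2.1

theorem one_lt_addVal_sub (f : fixedUpToOne σ) : 1 < ν ((f : K⟦ℚ⟧) - mapRingHom σ f) := f.2.2

theorem apply_coeff (f : fixedUpToOne σ) {q : ℚ} (hq : q ≤ 1) :
    σ ((f : K⟦ℚ⟧).coeff q) = (f : K⟦ℚ⟧).coeff q := by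
  have hlt : (q : WithTop ℚ) < ((f : K⟦ℚ⟧) - mapRingHom σ f).orderTop := by
    rw [← addVal_apply]
    exact (WithTop.coe_le_one.mpr hq).trans_lt (one_lt_addVal_sub f)
  have h := coeff_eq_zero_of_lt_orderTop hlt
  rw [coeff_sub, coeff_mapRingHom, sub_eq_zero] at h
  exact h.symm

theorem apply_leadingCoeff (f : fixedUpToOne σ) (h : (f : K⟦ℚ⟧).order ≤ 1) :
    σ (f : K⟦ℚ⟧).leadingCoeff = (f : K⟦ℚ⟧).leadingCoeff := by
  rw [leadingCoeff_eq]
  exact apply_coeff f h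

variable (σ) in
def monomial (q : ℚ) (z : K) (hq : 0 ≤ q) (hz : 1 < q ∨ σ z = z) : fixedUpToOne σ :=
  ⟨single q z, (WithTop.coe_nonneg.mpr hq).trans (coe_le_addVal_single q z), by
    rw [mapRingHom_single, ← single_sub]
    rcases hz with hq1 | hσz
    · exact (WithTop.one_lt_coe.mpr hq1).trans_le (coe_le_addVal_single q _)
    · simp [hσz]⟩

theorem isUnit_iff {f : fixedUpToOne σ} : IsUnit f ↔ ν f = 0 := by
  constructor
  · rintro ⟨u, rfl⟩
    have h := congrArg (fun g : fixedUpToOne σ => ν g) u.mul_inv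
    simp only [Subring.coe_mul, AddValuation.map_mul, OneMemClass.coe_one,
      AddValuation.map_one] at h
    exact le_antisymm (h ▸ le_add_of_nonneg_right (addVal_nonneg _)) (addVal_nonneg _)
  · intro h0
    have hf0 : (f : K⟦ℚ⟧) ≠ 0 := by
      rintro h
      simp [h] at h0
    have hσ : ν (mapRingHom σ (f : K⟦ℚ⟧)) = 0 := by
      rw [← h0]
      refine (ν).map_eq_of_lt_sub ?_
      rw [h0, AddValuation.map_sub_swap]
      exact zero_lt_one.trans (one_lt_addVal_sub f)
    have hσ0 : mapRingHom σ (f : K⟦ℚ⟧) ≠ 0 := by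
      rintro h
      simp [h] at hσ
    let g : fixedUpToOne σ := ⟨(f : K⟦ℚ⟧)⁻¹, by rw [AddValuation.map_inv, h0, neg_zero], by
      rw [map_inv₀, inv_sub_inv hf0 hσ0, AddValuation.map_div, AddValuation.map_mul, h0, hσ,
        add_zero, sub_zero, AddValuation.map_sub_swap]
      exact one_lt_addVal_sub f⟩
    exact IsUnit.of_mul_eq_one (b := g) (Subtype.ext (mul_inv_cancel₀ hf0))

theorem not_isUnit_iff {f : fixedUpToOne σ} : ¬IsUnit f ↔ 0 < ν f := by
  rw [isUnit_iff, (addVal_nonneg f).lt_iff_ne, ne_comm]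

instance : IsLocalRing (fixedUpToOne σ) :=
  IsLocalRing.of_nonunits_add fun a b ha hb ↦ by
    rw [mem_nonunits_iff, not_isUnit_iff] at *
    push_cast
    exact (ν).map_lt_add ha hb

theorem addVal_le_of_dvd {c x : fixedUpToOne σ} (h : c ∣ x) : ν c ≤ ν x := by
  obtain ⟨d, rfl⟩ := h
  rw [Subring.coe_mul, AddValuation.map_mul]
  exact le_add_of_nonneg_right (addVal_nonneg d)

theorem addVal_monomial {q : ℚ} {z : K} (hq : 0 ≤ q) (hz : 1 < q ∨ σ z = z) (hz0 : z ≠ 0) :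
    ν (monomial σ q z hq hz) = q := by
  rw [addVal_apply, monomial, orderTop_single hz0]

variable (σ) in
def X (γ : ℚ) (hγ : 0 ≤ γ) : fixedUpToOne σ := monomial σ γ 1 hγ (.inr (map_one σ))

theorem addVal_X {γ : ℚ} (hγ : 0 ≤ γ) : ν (X σ γ hγ) = γ :=
  addVal_monomial hγ _ one_ne_zero

theorem X_dvd {γ : ℚ} (hγ : 0 ≤ γ) {a : fixedUpToOne σ} (ha : (γ : WithTop ℚ) ≤ ν a)
    (ha' : ((1 + γ : ℚ) : WithTop ℚ) < ν ((a : K⟦ℚ⟧) - mapRingHom σ a)) : X σ γ hγ ∣ a := by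
  have hshift (x : K⟦ℚ⟧) : ν (single (-γ) 1 * x) = ↑(-γ) + ν x := by
    rw [AddValuation.map_mul, addVal_apply, orderTop_single one_ne_zero]
  refine ⟨⟨single (-γ) 1 * (a : K⟦ℚ⟧), ?_, ?_⟩, Subtype.ext ?_⟩
  · rw [hshift]
    generalize ν a = x at ha ⊢
    cases x with
    | top => simp
    | coe x =>
      norm_cast at ha ⊢
      linarith
  · rw [map_mul, mapRingHom_single, σ.map_one, ← mul_sub, hshift]
    generalize ν ((a : K⟦ℚ⟧) - mapRingHom σ a) = x at ha' ⊢
    cases x with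
    | top => simp
    | coe x =>
      norm_cast at ha' ⊢
      linarith
  · change (a : K⟦ℚ⟧) = single γ 1 * (single (-γ) 1 * (a : K⟦ℚ⟧))
    rw [← mul_assoc, single_mul_single, add_neg_cancel, mul_one, single_zero_one, one_mul]

theorem exists_pos_forall_X_dvd {a : fixedUpToOne σ} (ha : ¬IsUnit a) :
    ∃ ε > 0, ∀ γ (hγ : 0 ≤ γ), γ ≤ ε → X σ γ hγ ∣ a := by
  rw [not_isUnit_iff] at ha
  obtain ⟨x, hx0, hxa⟩ := exists_between ha
  obtain ⟨y, hy1, hya⟩ := exists_between (one_lt_addVal_sub a)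
  lift x to ℚ using hxa.ne_top
  lift y to ℚ using hya.ne_top
  norm_cast at hx0 hy1
  refine ⟨min x (y - 1), lt_min hx0 (by linarith), fun γ hγ hγε ↦ X_dvd hγ ?_ ?_⟩
  · exact (WithTop.coe_le_coe.mpr (hγε.trans (min_le_left _ _))).trans hxa.le
  · refine lt_of_le_of_lt (WithTop.coe_le_coe.mpr ?_) hya
    linarith [min_le_right x (y - 1)]

theorem exists_not_isUnit_dvd_dvd (a b : fixedUpToOne σ) (ha : ¬IsUnit a) (hb : ¬IsUnit b) :
    ∃ c, ¬IsUnit c ∧ c ∣ a ∧ c ∣ b := by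
  obtain ⟨εa, hεa, hXa⟩ := exists_pos_forall_X_dvd ha
  obtain ⟨εb, hεb, hXb⟩ := exists_pos_forall_X_dvd hb
  have hγ : 0 < min εa εb := lt_min hεa hεb
  refine ⟨X σ _ hγ.le, ?_, hXa _ hγ.le (min_le_left _ _), hXb _ hγ.le (min_le_right _ _)⟩
  rw [not_isUnit_iff, addVal_X]
  exact WithTop.coe_pos.mpr hγ

theorem maximalIdeal_not_isPrincipal :
    ¬(IsLocalRing.maximalIdeal (fixedUpToOne σ)).IsPrincipal := by
  rintro ⟨c, hc⟩
  have hc_mem : c ∈ IsLocalRing.maximalIdeal (fixedUpToOne σ) :=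
    hc ▸ Submodule.mem_span_singleton_self c
  rw [IsLocalRing.mem_maximalIdeal, mem_nonunits_iff, not_isUnit_iff] at hc_mem
  obtain ⟨γ, hγ0, hγc⟩ := exists_between hc_mem
  lift γ to ℚ using hγc.ne_top
  have hγ : 0 < γ := WithTop.coe_pos.mp hγ0
  have hX : X σ γ hγ.le ∈ IsLocalRing.maximalIdeal (fixedUpToOne σ) := by
    rw [IsLocalRing.mem_maximalIdeal, mem_nonunits_iff, not_isUnit_iff, addVal_X]
    exact hγ0
  rw [hc] at hX
  have hdvd : c ∣ X σ γ hγ.le := Ideal.mem_span_singleton.mp hX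
  have hle := addVal_le_of_dvd hdvd
  rw [addVal_X] at hle
  exact not_lt_of_ge hle hγc

theorem order_nonneg (f : fixedUpToOne σ) : 0 ≤ (f : K⟦ℚ⟧).order := by
  rcases eq_or_ne (f : K⟦ℚ⟧) 0 with hf | hf
  · rw [hf, order_zero]
  · have h := addVal_nonneg f
    rwa [addVal_apply_of_ne hf, WithTop.coe_nonneg] at h

theorem order_add_order_of_eq_mul {c d w : fixedUpToOne σ} (h : w = c * d)
    (hw : (w : K⟦ℚ⟧) ≠ 0) : (c : K⟦ℚ⟧).order + (d : K⟦ℚ⟧).order = (w : K⟦ℚ⟧).order := by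
  rw [h, Subring.coe_mul] at hw ⊢
  exact (order_mul (left_ne_zero_of_mul hw) (right_ne_zero_of_mul hw)).symm

theorem one_lt_order_or_of_eq_mul {c d w : fixedUpToOne σ} (h : w = c * d)
    (hw : σ (w : K⟦ℚ⟧).leadingCoeff ≠ (w : K⟦ℚ⟧).leadingCoeff) :
    1 < (c : K⟦ℚ⟧).order ∨ 1 < (d : K⟦ℚ⟧).order := by
  by_contra! hcd
  apply hw
  rw [h, Subring.coe_mul, leadingCoeff_mul, map_mul, apply_leadingCoeff c hcd.1,
    apply_leadingCoeff d hcd.2]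

theorem not_isPrimal_X_two {z : K} (hz : σ z ≠ z) (hz2 : σ (z * z) = z * z) :
    ¬IsPrimal (X σ 2 zero_le_two) := by
  set w := monomial σ (3 / 2) z (by norm_num) (.inl (by norm_num))
  have hz0 : z ≠ 0 := by
    rintro rfl
    exact hz (map_zero σ)
  have hw0 : (w : K⟦ℚ⟧) ≠ 0 := single_ne_zero hz0
  have hw_order : (w : K⟦ℚ⟧).order = 3 / 2 := order_single hz0
  have hw_lc : σ (w : K⟦ℚ⟧).leadingCoeff ≠ (w : K⟦ℚ⟧).leadingCoeff := by
    change σ (single _ z).leadingCoeff ≠ (single _ z).leadingCoeff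
    rwa [leadingCoeff_of_single]
  have hdvd : X σ 2 zero_le_two ∣ w * w :=
    ⟨monomial σ 1 (z * z) zero_le_one (.inr hz2), Subtype.ext <| by
      change single (3 / 2) z * single (3 / 2) z = single 2 1 * single 1 (z * z)
      rw [single_mul_single, single_mul_single, one_mul]
      norm_num⟩
  intro hprimal
  obtain ⟨c₁, c₂, ⟨d₁, hd₁⟩, ⟨d₂, hd₂⟩, hc⟩ := hprimal hdvd
  have hX0 : ((X σ 2 zero_le_two : fixedUpToOne σ) : K⟦ℚ⟧) ≠ 0 := single_ne_zero one_ne_zero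
  have hc_order := order_add_order_of_eq_mul hc hX0
  rw [show ((X σ 2 zero_le_two : fixedUpToOne σ) : K⟦ℚ⟧).order = 2 from
    order_single one_ne_zero] at hc_order
  have h₁ := order_add_order_of_eq_mul hd₁ hw0
  have h₂ := order_add_order_of_eq_mul hd₂ hw0
  have hd₁_nonneg := order_nonneg d₁
  have hd₂_nonneg := order_nonneg d₂
  rcases one_lt_order_or_of_eq_mul hd₁ hw_lc with h₁' | h₁' <;>
    rcases one_lt_order_or_of_eq_mul hd₂ hw_lc with h₂' | h₂' <;>
    linarith [order_nonneg c₁, order_nonneg c₂]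

end fixedUpToOne

end

/-- There exists an integral domain satisfying the PC condition which is
neither pre-Schreier (not every element is primal) nor satisfies the MIP condition
(it has a maximal ideal that is not principal). -/
theorem exists_pc_not_preSchreier_not_mip : ∃ (R : Type) (_ : CommRing R) (_ : IsDomain R),
    (∀ a b : R, Ideal.span {a, b} ≠ (⊤ : Ideal R) →
      ∃ c : R, Ideal.span {a, b} ≤ Ideal.span {c} ∧ Ideal.span ({c} : Set R) ≠ ⊤) ∧
    ¬(∀ c : R, IsPrimal c) ∧
    ¬(∀ I : Ideal R, I.IsMaximal → I.IsPrincipal) := by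
  refine ⟨fixedUpToOne (starRingEnd ℂ), inferInstance, inferInstance,
    exists_span_pair_le_span_singleton_ne_top fixedUpToOne.exists_not_isUnit_dvd_dvd, ?_, ?_⟩
  · exact fun h ↦ fixedUpToOne.not_isPrimal_X_two (z := Complex.I)
      (by norm_num [Complex.ext_iff]) (by simp) (h _)
  · exact fun h ↦ fixedUpToOne.maximalIdeal_not_isPrincipal
      (h _ (IsLocalRing.maximalIdeal.isMaximal _))
end

section
/- Let i be an irrational real number with 0 < i < 1, let M = ([0, 5 + i/2] ∩ ℚ) ∪ (5 + i/2, ∞) regarded as an additive submonoid of the nonnegative reals, and let N = (ℤ × (M ∖ {0})) ∪ (ℕ₀ × {0}) regarded as an additive submonoid of ℤ × ℝ. Let F be a field, let R = F[X; N] be the monoid ring, let m be its maximal ideal of elements with zero constant term, and let D = R_m. Then the maximal ideal mR_m of D is principal, generated by the image of the monomial X^{(1,0)}; in particular D satisfies the MIP condition. -/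
open scoped Classical

/-- The set `N = (ℤ × (M \ {0})) ∪ (ℕ₀ × {0})` inside `ℤ × ℝ`. -/
def Ncarrier (i : ℝ) : Set (ℤ × ℝ) :=
  {p | (p.2 ∈ Mcarrier i ∧ p.2 ≠ 0) ∨ (0 ≤ p.1 ∧ p.2 = 0)}

/-- `N` as an additive submonoid of `ℤ × ℝ`. -/
def Nsubmonoid (i : ℝ) (hi0 : 0 < i) : AddSubmonoid (ℤ × ℝ) where
  carrier := Ncarrier i
  zero_mem' := Or.inr ⟨le_refl 0, rfl⟩
  add_mem' := fun {a b} ha hb => by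
    have hsnd : (a + b).2 = a.2 + b.2 := rfl
    have hfst : (a + b).1 = a.1 + b.1 := rfl
    rcases ha with ⟨ha1, ha2⟩ | ⟨ha1, ha2⟩
    · rcases hb with ⟨hb1, hb2⟩ | ⟨hb1, hb2⟩
      · have hpa : 0 < a.2 := lt_of_le_of_ne (Mcarrier.nonneg hi0 ha1) (Ne.symm ha2)
        have hpb : 0 < b.2 := lt_of_le_of_ne (Mcarrier.nonneg hi0 hb1) (Ne.symm hb2)
        exact Or.inl ⟨hsnd ▸ Mcarrier.add_mem hi0 ha1 hb1,
          hsnd ▸ ne_of_gt (add_pos hpa hpb)⟩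
      · exact Or.inl ⟨by rw [hsnd, hb2, add_zero]; exact ha1,
          by rw [hsnd, hb2, add_zero]; exact ha2⟩
    · rcases hb with ⟨hb1, hb2⟩ | ⟨hb1, hb2⟩
      · exact Or.inl ⟨by rw [hsnd, ha2, zero_add]; exact hb1,
          by rw [hsnd, ha2, zero_add]; exact hb2⟩
      · exact Or.inr ⟨by rw [hfst]; omega, by rw [hsnd, ha2, hb2, add_zero]⟩

theorem Ncarrier.snd_nonneg {i : ℝ} (hi0 : 0 < i) {x : ℤ × ℝ} (hx : x ∈ Ncarrier i) :
    0 ≤ x.2 := by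
  rcases hx with ⟨hx1, _⟩ | ⟨_, hx2⟩
  · exact Mcarrier.nonneg hi0 hx1
  · rw [hx2]

theorem Nsubmonoid_pos_monoid (i : ℝ) (hi0 : 0 < i) :
    ∀ a b : Nsubmonoid i hi0, a + b = 0 → a = 0 ∧ b = 0 := fun a b h => by
  have hval : (a : ℤ × ℝ) + (b : ℤ × ℝ) = 0 := by
    have := congrArg Subtype.val h
    push_cast at this
    exact this
  have h1 : (a : ℤ × ℝ).1 + (b : ℤ × ℝ).1 = 0 := congrArg Prod.fst hval
  have h2 : (a : ℤ × ℝ).2 + (b : ℤ × ℝ).2 = 0 := congrArg Prod.snd hval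
  have ka : 0 ≤ (a : ℤ × ℝ).2 := Ncarrier.snd_nonneg hi0 a.property
  have kb : 0 ≤ (b : ℤ × ℝ).2 := Ncarrier.snd_nonneg hi0 b.property
  have ha2 : (a : ℤ × ℝ).2 = 0 := by linarith
  have hb2 : (b : ℤ × ℝ).2 = 0 := by linarith
  have ha1 : 0 ≤ (a : ℤ × ℝ).1 := by
    rcases a.property with ⟨_, h'⟩ | ⟨h', _⟩
    · exact absurd ha2 h'
    · exact h'
  have hb1 : 0 ≤ (b : ℤ × ℝ).1 := by
    rcases b.property with ⟨_, h'⟩ | ⟨h', _⟩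
    · exact absurd hb2 h'
    · exact h'
  refine ⟨Subtype.ext ?_, Subtype.ext ?_⟩ <;> rw [ZeroMemClass.coe_zero] <;>
      refine Prod.ext_iff.mpr ⟨?_, ?_⟩ <;> simp only [Prod.fst_zero, Prod.snd_zero]
  · omega
  · exact ha2
  · omega
  · exact hb2

theorem mem_N_one_zero (i : ℝ) (hi0 : 0 < i) : ((1 : ℤ), (0 : ℝ)) ∈ Nsubmonoid i hi0 :=
  Or.inr ⟨by norm_num, rfl⟩

/-!
The element `g = (1, 0)` of `N` divides every nonzero element of `N`: if `n = (k, x)` with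
`x ≠ 0` then `(k - 1, x) ∈ N`, and if `x = 0` then `k ≥ 1`. Hence every monomial of an element
with zero constant term is a multiple of `X^g`, so already in `F[X; N]` the augmentation ideal
is generated by `X^g`. Its extension to the local ring `D` is then the principal maximal ideal,
and it is the only maximal ideal of `D`.
-/

theorem augIdeal_eq_span_single {F M : Type*} [Field F] [AddCommMonoid M]
    (hM : ∀ a b : M, a + b = 0 → a = 0 ∧ b = 0) {g : M} (hg : g ≠ 0)
    (hdvd : ∀ n ≠ 0, ∃ m, g + m = n) :
    augIdeal F M hM = Ideal.span {AddMonoidAlgebra.single g (1 : F)} := by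
  apply le_antisymm
  · intro f hf
    rw [mem_augIdeal_iff] at hf
    rw [← AddMonoidAlgebra.sum_coeff_single f]
    refine Ideal.sum_mem _ fun n hn => ?_
    have hn0 : n ≠ 0 := by
      rintro rfl
      exact Finsupp.mem_support_iff.mp hn hf
    obtain ⟨m, rfl⟩ := hdvd n hn0
    refine Ideal.mem_span_singleton'.mpr ⟨AddMonoidAlgebra.single m (f.coeff (g + m)), ?_⟩
    rw [AddMonoidAlgebra.single_mul_single, mul_one, add_comm]
  · rw [Ideal.span_le, Set.singleton_subset_iff, SetLike.mem_coe, mem_augIdeal_iff]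
    exact Finsupp.single_eq_of_ne hg.symm

theorem Nsubmonoid.exists_add_eq_of_ne_zero {i : ℝ} {hi0 : 0 < i} {n : Nsubmonoid i hi0}
    (hn : n ≠ 0) : ∃ m, ⟨((1 : ℤ), (0 : ℝ)), mem_N_one_zero i hi0⟩ + m = n := by
  obtain ⟨⟨k, x⟩, hkx⟩ := n
  have hmem : (k - 1, x) ∈ Nsubmonoid i hi0 := by
    rcases hkx with hx | ⟨hk, hx0⟩
    · exact Or.inl hx
    · have hk0 : k ≠ 0 := by
        rintro rfl
        exact hn (Subtype.ext (Prod.ext rfl hx0))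
      exact Or.inr ⟨by dsimp only at hk ⊢; omega, hx0⟩
  exact ⟨⟨_, hmem⟩, Subtype.ext (Prod.ext (by simp) (by simp))⟩

theorem localization_monoidAlgebra_N_mip_general (i : ℝ) (hi0 : 0 < i) (F : Type*) [Field F] :
    (Ideal.map (algebraMap (AddMonoidAlgebra F (Nsubmonoid i hi0))
        (Localization.AtPrime (augIdeal F (Nsubmonoid i hi0) (Nsubmonoid_pos_monoid i hi0))))
        (augIdeal F (Nsubmonoid i hi0) (Nsubmonoid_pos_monoid i hi0)) =
      Ideal.span {algebraMap (AddMonoidAlgebra F (Nsubmonoid i hi0))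
        (Localization.AtPrime (augIdeal F (Nsubmonoid i hi0) (Nsubmonoid_pos_monoid i hi0)))
        (AddMonoidAlgebra.single (⟨((1 : ℤ), (0 : ℝ)), mem_N_one_zero i hi0⟩ :
          Nsubmonoid i hi0) (1 : F))}) ∧
    (∀ I : Ideal (Localization.AtPrime
        (augIdeal F (Nsubmonoid i hi0) (Nsubmonoid_pos_monoid i hi0))),
      I.IsMaximal → I.IsPrincipal) := by
  have hg : (⟨((1 : ℤ), (0 : ℝ)), mem_N_one_zero i hi0⟩ : Nsubmonoid i hi0) ≠ 0 := by
    simp [Subtype.ext_iff]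
  have hspan := augIdeal_eq_span_single (F := F) (Nsubmonoid_pos_monoid i hi0) hg
    fun _ => Nsubmonoid.exists_add_eq_of_ne_zero
  have hmap := congrArg (Ideal.map (algebraMap _
    (Localization.AtPrime (augIdeal F _ (Nsubmonoid_pos_monoid i hi0))))) hspan
  rw [Ideal.map_span, Set.image_singleton] at hmap
  refine ⟨hmap, fun I hI => ?_⟩
  rw [IsLocalRing.eq_maximalIdeal hI, ← Localization.AtPrime.map_eq_maximalIdeal, hmap]
  exact ⟨⟨_, rfl⟩⟩

/-- Let `i` be an irrational real with `0 < i < 1`, let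
`M = ([0, 5 + i/2] ∩ ℚ) ∪ (5 + i/2, ∞)` as a submonoid of the nonnegative reals, let
`N = (ℤ × (M \ {0})) ∪ (ℕ₀ × {0})` as a submonoid of `ℤ × ℝ`, let `F` be a field,
`R = F[X; N]` the monoid ring, `m` its maximal ideal of elements with zero constant
term, and `D = R_m`. Then the maximal ideal `mR_m` of `D` is principal, generated by
the image of the monomial `X^{(1,0)}`; in particular `D` satisfies the MIP condition. -/
theorem localization_monoidAlgebra_N_mip (i : ℝ) (hi : Irrational i) (hi0 : 0 < i)
    (hi1 : i < 1) (F : Type*) [Field F] :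
    (Ideal.map (algebraMap (AddMonoidAlgebra F (Nsubmonoid i hi0))
        (Localization.AtPrime (augIdeal F (Nsubmonoid i hi0) (Nsubmonoid_pos_monoid i hi0))))
        (augIdeal F (Nsubmonoid i hi0) (Nsubmonoid_pos_monoid i hi0)) =
      Ideal.span {algebraMap (AddMonoidAlgebra F (Nsubmonoid i hi0))
        (Localization.AtPrime (augIdeal F (Nsubmonoid i hi0) (Nsubmonoid_pos_monoid i hi0)))
        (AddMonoidAlgebra.single (⟨((1 : ℤ), (0 : ℝ)), mem_N_one_zero i hi0⟩ :
          Nsubmonoid i hi0) (1 : F))}) ∧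
    (∀ I : Ideal (Localization.AtPrime
        (augIdeal F (Nsubmonoid i hi0) (Nsubmonoid_pos_monoid i hi0))),
      I.IsMaximal → I.IsPrincipal) :=
  localization_monoidAlgebra_N_mip_general i hi0 F
end

section
/- Let i be an irrational real number with 0 < i < 1, let q be a rational number with 19 < q < 20, let r be a rational number with 10 < r < 10 + i, let M = ([0, 5 + i/2] ∩ ℚ) ∪ (5 + i/2, ∞) regarded as an additive submonoid of the nonnegative reals, and let N = (ℤ × (M ∖ {0})) ∪ (ℕ₀ × {0}) regarded as an additive submonoid of ℤ × ℝ. Let F be a field, let R = F[X; N] be the monoid ring, let m be its maximal ideal of elements with zero constant term, and let D = R_m. Then in D the element X^{(0,10+i)} divides X^{(0,r)} · X^{(0,q−r)}, but there do not exist y, z ∈ D with y·z = X^{(0,10+i)}, y dividing X^{(0,r)}, and z dividing X^{(0,q−r)}; in particular D is not a pre-Schreier domain (hence not Bézout). -/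
open scoped Classical

theorem mem_N_ten_add (i : ℝ) (hi0 : 0 < i) :
    ((0 : ℤ), 10 + i) ∈ Nsubmonoid i hi0 :=
  Or.inl ⟨Or.inr (by simp only [Set.mem_Ioi]; linarith), by
    simp only; intro h; linarith⟩

theorem mem_N_r (i : ℝ) (hi0 : 0 < i) (hi1 : i < 1) (r : ℚ) (hr1 : 10 < (r : ℝ)) :
    ((0 : ℤ), (r : ℝ)) ∈ Nsubmonoid i hi0 :=
  Or.inl ⟨Or.inr (by simp only [Set.mem_Ioi]; linarith), by
    simp only; intro h; rw [h] at hr1; linarith⟩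

theorem mem_N_qr (i : ℝ) (hi0 : 0 < i) (hi1 : i < 1) (q r : ℚ) (hq1 : 19 < (q : ℝ))
    (hr2 : (r : ℝ) < 10 + i) : ((0 : ℤ), (q : ℝ) - (r : ℝ)) ∈ Nsubmonoid i hi0 :=
  Or.inl ⟨Or.inr (by simp only [Set.mem_Ioi]; linarith), by
    simp only; intro h; linarith⟩

/-- The image in `D = R_m` of the monomial `X^ν` of `R = F[X; N]`. -/
noncomputable def monoN (i : ℝ) (hi0 : 0 < i) (F : Type*) [Field F] (ν : ℤ × ℝ)
    (hν : ν ∈ Nsubmonoid i hi0) :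
    Localization.AtPrime (augIdeal F (Nsubmonoid i hi0) (Nsubmonoid_pos_monoid i hi0)) :=
  algebraMap (AddMonoidAlgebra F (Nsubmonoid i hi0))
    (Localization.AtPrime (augIdeal F (Nsubmonoid i hi0) (Nsubmonoid_pos_monoid i hi0)))
    (AddMonoidAlgebra.single (⟨ν, hν⟩ : Nsubmonoid i hi0) (1 : F))

/-!
Sending `(n, x) ∈ N` to `(x, n) ∈ ℝ × ℤ`, ordered lexicographically, embeds `N` additively into
a totally ordered group. Hence lowest terms of elements of `F[X; N]` multiply without
cancellation, and the lowest degree is an additive valuation. Every degree is lexicographically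
nonnegative, so the valuation vanishes outside `m` and extends to `D = R_m`, where its finite
values are still degrees of elements of `N`. A splitting `y z = X^{(0,10+i)}`, `y ∣ X^{(0,r)}`,
`z ∣ X^{(0,q-r)}` in `D` therefore gives `α, β, γ, δ ∈ M` with `α + β = 10 + i`, `α + γ = r`,
`β + δ = q - r`. As `10 + i` is irrational, one of `α, β` is irrational, say `α`; irrational
elements of `M` exceed `5 + i/2`, and so does `γ = r - α`, whence `r > 10 + i`. Symmetrically
for `β`, using `q - r < 10 + i`.
-/

theorem UniqueAdd.of_isMinOn {A B : Type*} [AddMonoid A] [AddCommMonoid B] [LinearOrder B]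
    [IsOrderedCancelAddMonoid B] {D : A →+ B} (hD : Function.Injective D) {s t : Finset A}
    {a₀ b₀ : A} (ha : IsMinOn D s a₀) (hb : IsMinOn D t b₀) : UniqueAdd s t a₀ b₀ :=
  fun a b ha' hb' hab => by
    have h := (add_eq_add_iff_eq_and_eq (isMinOn_iff.1 ha a ha') (isMinOn_iff.1 hb b hb')).1
      (by rw [← map_add, ← map_add, hab])
    exact ⟨hD h.1.symm, hD h.2.symm⟩

namespace AddMonoidAlgebra

section LowestDegree

variable {R A B : Type*} [Semiring R] [AddMonoid A] [AddCancelCommMonoid B] [LinearOrder B]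
  {D : A →+ B}

theorem exists_isMinOn_infDegree_eq {f : R[A]} (hf : f ≠ 0) :
    ∃ a ∈ f.coeff.support, IsMinOn D f.coeff.support a ∧
      f.infDegree (WithTop.some ∘ D) = D a := by
  obtain ⟨a, ha, hinf⟩ := Finset.exists_mem_eq_inf _
    (Finsupp.support_nonempty_iff.2 (coeff_eq_zero.not.2 hf)) (WithTop.some ∘ D)
  refine ⟨a, ha, isMinOn_iff.2 fun x hx => ?_, hinf⟩
  have hle := Finset.inf_le (f := WithTop.some ∘ D) hx
  rw [hinf] at hle
  exact WithTop.coe_le_coe.1 hle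

theorem infDegree_zero : (0 : R[A]).infDegree (WithTop.some ∘ D) = ⊤ := by
  simp [infDegree]

theorem infDegree_single (a : A) {r : R} (hr : r ≠ 0) :
    (single a r).infDegree (WithTop.some ∘ D) = D a := by
  simp [infDegree, coeff_single, Finsupp.support_single, hr]

theorem infDegree_mul [NoZeroDivisors R] [IsOrderedCancelAddMonoid B] (hD : Function.Injective D)
    (f g : R[A]) :
    (f * g).infDegree (WithTop.some ∘ D) =
      f.infDegree (WithTop.some ∘ D) + g.infDegree (WithTop.some ∘ D) := by
  rcases eq_or_ne f 0 with rfl | hf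
  · simp [infDegree_zero]
  rcases eq_or_ne g 0 with rfl | hg
  · simp [infDegree_zero]
  obtain ⟨a, ha, hmina, hfa⟩ := exists_isMinOn_infDegree_eq (D := D) hf
  obtain ⟨b, hb, hminb, hgb⟩ := exists_isMinOn_infDegree_eq (D := D) hg
  have hab : a + b ∈ (f * g).coeff.support := by
    rw [Finsupp.mem_support_iff, coeff_mul_add_of_uniqueAdd (UniqueAdd.of_isMinOn hD hmina hminb)]
    exact mul_ne_zero (Finsupp.mem_support_iff.1 ha) (Finsupp.mem_support_iff.1 hb)
  refine le_antisymm ?_ (le_infDegree_mul (WithTop.addHom.comp D).toAddHom f g)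
  rw [hfa, hgb, ← WithTop.coe_add, ← map_add]
  exact Finset.inf_le (f := WithTop.some ∘ D) hab

theorem infDegree_eq_zero [IsOrderedAddMonoid B] (hD : ∀ a, 0 ≤ D a) {f : R[A]}
    (hf : f.coeff 0 ≠ 0) : f.infDegree (WithTop.some ∘ D) = 0 := by
  refine le_antisymm ?_ (Finset.le_inf fun a _ => WithTop.coe_nonneg.2 (hD a))
  simpa using Finset.inf_le (f := WithTop.some ∘ D) (Finsupp.mem_support_iff.2 hf)

noncomputable def infDegreeValuation (R : Type*) [Ring R] [IsDomain R]
    [IsOrderedCancelAddMonoid B] (hD : Function.Injective D) : AddValuation R[A] (WithTop B) :=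
  AddValuation.of (infDegree (WithTop.some ∘ D)) infDegree_zero
    (by rw [one_def, infDegree_single 0 one_ne_zero, map_zero, WithTop.coe_zero])
    (le_infDegree_add _) (infDegree_mul hD)

end LowestDegree

end AddMonoidAlgebra

namespace AddValuation

variable {A : Type*} [CommRing A] {Γ : Type*} [LinearOrderedAddCommGroupWithTop Γ]
  (v : AddValuation A Γ) {S : Submonoid A} (hS : ∀ s ∈ S, v s ≠ ⊤) (B : Type*) [CommRing B]
  [Algebra A B] [IsLocalization S B]

noncomputable def extendToLocalization : AddValuation B Γ :=
  ofValuation ((toValuation v).extendToLocalization (fun s hs => hS s hs) B)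

theorem extendToLocalization_apply_map_apply (a : A) :
    extendToLocalization v hS B (algebraMap A B a) = v a :=
  Valuation.extendToLocalization_apply_map_apply (toValuation v) (fun s hs => hS s hs) B a

theorem exists_extendToLocalization_eq (hv : ∀ s ∈ S, v s = 0) (b : B) :
    ∃ a, extendToLocalization v hS B b = v a := by
  obtain ⟨⟨a, s⟩, hb⟩ := IsLocalization.surj S b
  refine ⟨a, ?_⟩
  have := congrArg (extendToLocalization v hS B) hb
  rwa [map_mul, extendToLocalization_apply_map_apply, extendToLocalization_apply_map_apply,
    hv s s.2, add_zero] at this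

end AddValuation

theorem Mcarrier.add_ne_ten_add {i : ℝ} (hi : Irrational i) {r s : ℚ} (hr : (r : ℝ) < 10 + i)
    (hs : (s : ℝ) < 10 + i) {α β γ δ : ℝ} (hα : α ∈ Mcarrier i) (hβ : β ∈ Mcarrier i)
    (hγ : γ ∈ Mcarrier i) (hδ : δ ∈ Mcarrier i) (hαγ : α + γ = r) (hβδ : β + δ = s) :
    α + β ≠ 10 + i := by
  intro hαβ
  rcases hα with ⟨-, a, rfl⟩ | hα <;> rcases hβ with ⟨-, b, rfl⟩ | hβ
  · exact hi ⟨a + b - 10, by push_cast; linarith⟩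
  · rcases hδ with ⟨-, d, rfl⟩ | hδ
    · exact hi ⟨a + s - d - 10, by push_cast; linarith⟩
    · simp only [Set.mem_Ioi] at hβ hδ
      linarith
  · rcases hγ with ⟨-, c, rfl⟩ | hγ
    · exact hi ⟨r - c + b - 10, by push_cast; linarith⟩
    · simp only [Set.mem_Ioi] at hα hγ
      linarith
  · simp only [Set.mem_Ioi] at hα hβ
    linarith

theorem snd_mem_Mcarrier {i : ℝ} (hi0 : 0 < i) (ν : Nsubmonoid i hi0) :
    (ν : ℤ × ℝ).2 ∈ Mcarrier i := by
  rcases ν.2 with ⟨hM, -⟩ | ⟨-, h0⟩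
  · exact hM
  · rw [h0]
    exact (Msubmonoid i hi0).zero_mem

theorem mem_Nsubmonoid_of_lt {i : ℝ} (hi0 : 0 < i) (n : ℤ) {x : ℝ} (hx : 5 + i / 2 < x) :
    (n, x) ∈ Nsubmonoid i hi0 :=
  Or.inl ⟨Or.inr hx, by dsimp only; linarith⟩

section NotPreSchreier

variable {i : ℝ} (hi0 : 0 < i) (F : Type*) [Field F]

def lexDegree : Nsubmonoid i hi0 →+ Lex (ℝ × ℤ) where
  toFun ν := toLex ((ν : ℤ × ℝ).2, (ν : ℤ × ℝ).1)
  map_zero' := rfl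
  map_add' _ _ := rfl

theorem lexDegree_injective : Function.Injective (lexDegree hi0) := fun _ _ h =>
  Subtype.ext (Prod.ext (congrArg (fun p => (ofLex p).2) h) (congrArg (fun p => (ofLex p).1) h))

theorem lexDegree_nonneg (ν : Nsubmonoid i hi0) : 0 ≤ lexDegree hi0 ν := by
  rw [Prod.Lex.le_iff]
  rcases ν.2 with ⟨hM, hne⟩ | ⟨hfst, hsnd⟩
  · exact Or.inl ((Mcarrier.nonneg hi0 hM).lt_of_ne' hne)
  · exact Or.inr ⟨hsnd.symm, hfst⟩

theorem infDegreeValuation_eq_zero_of_mem_primeCompl {s : AddMonoidAlgebra F (Nsubmonoid i hi0)}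
    (hs : s ∈ (augIdeal F (Nsubmonoid i hi0) (Nsubmonoid_pos_monoid i hi0)).primeCompl) :
    AddMonoidAlgebra.infDegreeValuation F (lexDegree_injective hi0) s = 0 :=
  AddMonoidAlgebra.infDegree_eq_zero (lexDegree_nonneg hi0)
    (mt (mem_augIdeal_iff F _ _ s).2 hs)

noncomputable def ordN : AddValuation
    (Localization.AtPrime (augIdeal F (Nsubmonoid i hi0) (Nsubmonoid_pos_monoid i hi0)))
    (WithTop (Lex (ℝ × ℤ))) :=
  AddValuation.extendToLocalization
    (AddMonoidAlgebra.infDegreeValuation F (lexDegree_injective hi0))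
    (fun _ hs => (infDegreeValuation_eq_zero_of_mem_primeCompl hi0 F hs).trans_ne
      WithTop.zero_ne_top) _

theorem ordN_monoN (ν : ℤ × ℝ) (hν : ν ∈ Nsubmonoid i hi0) :
    ordN hi0 F (monoN i hi0 F ν hν) = lexDegree hi0 ⟨ν, hν⟩ := by
  rw [ordN, monoN, AddValuation.extendToLocalization_apply_map_apply]
  exact AddMonoidAlgebra.infDegree_single _ one_ne_zero

theorem exists_ordN_eq_of_dvd_monoN {y : Localization.AtPrime
      (augIdeal F (Nsubmonoid i hi0) (Nsubmonoid_pos_monoid i hi0))}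
    {ν : ℤ × ℝ} {hν : ν ∈ Nsubmonoid i hi0} (h : y ∣ monoN i hi0 F ν hν) :
    ∃ a, ordN hi0 F y = lexDegree hi0 a := by
  obtain ⟨z, hz⟩ := h
  have hy : ordN hi0 F y ≠ ⊤ := fun htop => by
    have := congrArg (ordN hi0 F) hz
    rw [AddValuation.map_mul, ordN_monoN, htop, top_add] at this
    exact WithTop.coe_ne_top this
  obtain ⟨f, hf⟩ := AddValuation.exists_extendToLocalization_eq _ _ _
    (fun _ hs => infDegreeValuation_eq_zero_of_mem_primeCompl hi0 F hs) y
  have hf0 : f ≠ 0 := by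
    rintro rfl
    exact hy (by rw [ordN, hf, AddValuation.map_zero])
  obtain ⟨a, -, -, ha⟩ := AddMonoidAlgebra.exists_isMinOn_infDegree_eq (D := lexDegree hi0) hf0
  exact ⟨a, hf.trans ha⟩

theorem snd_add_snd_eq_of_mul_eq_monoN {y z : Localization.AtPrime
      (augIdeal F (Nsubmonoid i hi0) (Nsubmonoid_pos_monoid i hi0))}
    {a b : Nsubmonoid i hi0} {ν : ℤ × ℝ} {hν : ν ∈ Nsubmonoid i hi0}
    (hy : ordN hi0 F y = lexDegree hi0 a) (hz : ordN hi0 F z = lexDegree hi0 b)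
    (h : y * z = monoN i hi0 F ν hν) : (a : ℤ × ℝ).2 + (b : ℤ × ℝ).2 = ν.2 := by
  have := congrArg (ordN hi0 F) h
  rw [AddValuation.map_mul, hy, hz, ordN_monoN, ← WithTop.coe_add, WithTop.coe_inj,
    ← map_add] at this
  exact congrArg (fun c : Nsubmonoid i hi0 => (c : ℤ × ℝ).2) (lexDegree_injective hi0 this)

theorem monoN_mul (ν μ : ℤ × ℝ) (hν : ν ∈ Nsubmonoid i hi0) (hμ : μ ∈ Nsubmonoid i hi0) :
    monoN i hi0 F ν hν * monoN i hi0 F μ hμ = monoN i hi0 F (ν + μ) (add_mem hν hμ) := by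
  rw [monoN, monoN, monoN, ← map_mul, AddMonoidAlgebra.single_mul_single, one_mul]
  rfl

theorem monoN_dvd_monoN_mul {κ ν μ κ' : ℤ × ℝ} (hκ : κ ∈ Nsubmonoid i hi0)
    (hν : ν ∈ Nsubmonoid i hi0) (hμ : μ ∈ Nsubmonoid i hi0) (hκ' : κ' ∈ Nsubmonoid i hi0)
    (h : ν + μ = κ + κ') : monoN i hi0 F κ hκ ∣ monoN i hi0 F ν hν * monoN i hi0 F μ hμ := by
  refine ⟨monoN i hi0 F κ' hκ', ?_⟩
  rw [monoN_mul, monoN_mul]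
  congr 1

theorem not_exists_mul_eq_monoN {κ ν μ : ℤ × ℝ} (hκ : κ ∈ Nsubmonoid i hi0)
    (hν : ν ∈ Nsubmonoid i hi0) (hμ : μ ∈ Nsubmonoid i hi0)
    (hM : ∀ α ∈ Mcarrier i, ∀ β ∈ Mcarrier i, ∀ γ ∈ Mcarrier i, ∀ δ ∈ Mcarrier i,
      α + γ = ν.2 → β + δ = μ.2 → α + β ≠ κ.2) :
    ¬∃ y z, y * z = monoN i hi0 F κ hκ ∧ y ∣ monoN i hi0 F ν hν ∧ z ∣ monoN i hi0 F μ hμ := by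
  rintro ⟨y, z, hyz, ⟨h, hh⟩, ⟨k, hk⟩⟩
  obtain ⟨a, ha⟩ := exists_ordN_eq_of_dvd_monoN hi0 F ⟨h, hh⟩
  obtain ⟨b, hb⟩ := exists_ordN_eq_of_dvd_monoN hi0 F ⟨k, hk⟩
  obtain ⟨c, hc⟩ := exists_ordN_eq_of_dvd_monoN hi0 F ⟨y, hh.trans (mul_comm y h)⟩
  obtain ⟨d, hd⟩ := exists_ordN_eq_of_dvd_monoN hi0 F ⟨z, hk.trans (mul_comm z k)⟩
  exact hM _ (snd_mem_Mcarrier hi0 a) _ (snd_mem_Mcarrier hi0 b) _ (snd_mem_Mcarrier hi0 c) _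
    (snd_mem_Mcarrier hi0 d) (snd_add_snd_eq_of_mul_eq_monoN hi0 F ha hc hh.symm)
    (snd_add_snd_eq_of_mul_eq_monoN hi0 F hb hd hk.symm)
    (snd_add_snd_eq_of_mul_eq_monoN hi0 F ha hb hyz)

end NotPreSchreier

/-- With `i` irrational, `0 < i < 1`, `q ∈ ℚ`, `19 < q < 20`, `r ∈ ℚ`,
`10 < r < 10 + i`, `M = ([0, 5 + i/2] ∩ ℚ) ∪ (5 + i/2, ∞)`,
`N = (ℤ × (M \ {0})) ∪ (ℕ₀ × {0}) ⊆ ℤ × ℝ`, `F` a field, `R = F[X; N]`, `m` its maximal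
ideal of elements with zero constant term and `D = R_m`: in `D` the element
`X^{(0,10+i)}` divides `X^{(0,r)} · X^{(0,q-r)}`, but there are no `y, z ∈ D` with
`y·z = X^{(0,10+i)}`, `y ∣ X^{(0,r)}` and `z ∣ X^{(0,q-r)}`; in particular `D` is not a
pre-Schreier domain (hence not Bézout). -/
theorem localization_monoidAlgebra_N_not_preSchreier (i : ℝ) (hi : Irrational i)
    (hi0 : 0 < i) (hi1 : i < 1) (q : ℚ) (hq1 : 19 < (q : ℝ)) (hq2 : (q : ℝ) < 20)
    (r : ℚ) (hr1 : 10 < (r : ℝ)) (hr2 : (r : ℝ) < 10 + i) (F : Type*) [Field F] :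
    (monoN i hi0 F ((0 : ℤ), 10 + i) (mem_N_ten_add i hi0) ∣
      monoN i hi0 F ((0 : ℤ), (r : ℝ)) (mem_N_r i hi0 hi1 r hr1) *
      monoN i hi0 F ((0 : ℤ), (q : ℝ) - (r : ℝ)) (mem_N_qr i hi0 hi1 q r hq1 hr2)) ∧
    (¬∃ y z : Localization.AtPrime
        (augIdeal F (Nsubmonoid i hi0) (Nsubmonoid_pos_monoid i hi0)),
      y * z = monoN i hi0 F ((0 : ℤ), 10 + i) (mem_N_ten_add i hi0) ∧
      y ∣ monoN i hi0 F ((0 : ℤ), (r : ℝ)) (mem_N_r i hi0 hi1 r hr1) ∧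
      z ∣ monoN i hi0 F ((0 : ℤ), (q : ℝ) - (r : ℝ)) (mem_N_qr i hi0 hi1 q r hq1 hr2)) ∧
    ¬(∀ c : Localization.AtPrime
        (augIdeal F (Nsubmonoid i hi0) (Nsubmonoid_pos_monoid i hi0)), IsPrimal c) := by
  have hdvd := monoN_dvd_monoN_mul hi0 F (mem_N_ten_add i hi0) (mem_N_r i hi0 hi1 r hr1)
    (mem_N_qr i hi0 hi1 q r hq1 hr2) (mem_Nsubmonoid_of_lt hi0 0 (x := q - (10 + i)) (by linarith))
    (Prod.ext (add_zero 0) (by simp))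
  have hsplit := not_exists_mul_eq_monoN hi0 F (mem_N_ten_add i hi0) (mem_N_r i hi0 hi1 r hr1)
    (mem_N_qr i hi0 hi1 q r hq1 hr2) fun α hα β hβ γ hγ δ hδ hαγ hβδ =>
      Mcarrier.add_ne_ten_add hi (s := q - r) hr2 (by push_cast; linarith) hα hβ hγ hδ hαγ
        (by push_cast; exact hβδ)
  refine ⟨hdvd, hsplit, fun hprimal => hsplit ?_⟩
  obtain ⟨y, z, hy, hz, hyz⟩ := hprimal _ hdvd
  exact ⟨y, z, hyz.symm, hy, hz⟩
end

section
/- There exists an integral domain in which every maximal ideal is principal but which is not a principal ideal domain; equivalently, the MIP condition is strictly weaker than the condition that every prime ideal is principal. -/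
/-!
Take `R = ℤ + X ℚ⟦X⟧`. A series whose constant coefficient is a unit of `ℤ` is a unit of
`R`, so the kernel `X ℚ⟦X⟧` of the constant-coefficient map `R → ℤ` lies in every maximal
ideal. Hence every maximal ideal is the preimage of some `pℤ`, and it equals `pR` because a
nonzero integer divides every series with zero constant term. The prime `X ℚ⟦X⟧` is not
principal: for a generator `g`, comparing `X`-coefficients in `c X = g t` gives `c ∈ g₁ ℤ`
for every `c ∈ ℚ`.
-/

open PowerSeries

noncomputable section

theorem Subring.ne_top_of_not_isField {K : Type*} [Field K] {A : Subring K} (hA : ¬IsField A) :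
    A ≠ ⊤ := by
  rintro rfl
  exact hA (Subring.topEquiv.toMulEquiv.isField (Field.toIsField K))

namespace PowerSeries

variable {K : Type*} [Field K] (A : Subring K)

/-- The ring `A + X K⟦X⟧`. -/
def withConstantCoeffIn : Subring K⟦X⟧ :=
  A.comap constantCoeff

local notation "R" => withConstantCoeffIn A

theorem mem_withConstantCoeffIn {f : K⟦X⟧} : f ∈ R ↔ constantCoeff f ∈ A :=
  Iff.rfl

def constantCoeffIn : R →+* A :=
  (constantCoeff.comp (Subring.subtype R)).codRestrict A fun f => f.2

def CIn : A →+* R :=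
  (C.comp A.subtype).codRestrict R fun a => by simp [mem_withConstantCoeffIn]

variable {A}

@[simp]
theorem coe_constantCoeffIn (f : R) : (constantCoeffIn A f : K) = constantCoeff (f : K⟦X⟧) :=
  rfl

@[simp]
theorem coe_CIn (a : A) : (CIn A a : K⟦X⟧) = C (a : K) :=
  rfl

@[simp]
theorem constantCoeffIn_CIn (a : A) : constantCoeffIn A (CIn A a) = a :=
  Subtype.ext (by simp)

theorem constantCoeffIn_surjective : Function.Surjective (constantCoeffIn A) :=
  fun a => ⟨CIn A a, constantCoeffIn_CIn a⟩

theorem isUnit_of_isUnit_constantCoeffIn {f : R} (hf : IsUnit (constantCoeffIn A f)) :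
    IsUnit f := by
  obtain ⟨u, hu⟩ := hf
  have hcc : constantCoeff (f : K⟦X⟧) = (u : A) := by rw [hu, coe_constantCoeffIn]
  have hinv : (f : K⟦X⟧)⁻¹ ∈ R := by
    have hu' : (((u⁻¹ : Aˣ) : A) : K) * ((u : A) : K) = 1 := by
      rw [← Subring.coe_mul, Units.inv_mul, Subring.coe_one]
    rw [mem_withConstantCoeffIn, constantCoeff_inv, hcc, ← eq_inv_of_mul_eq_one_left hu']
    exact (u⁻¹ : Aˣ).1.2
  have hne : constantCoeff (f : K⟦X⟧) ≠ 0 := by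
    rw [hcc]; exact fun h => u.ne_zero (Subtype.ext h)
  exact IsUnit.of_mul_eq_one (a := f) ⟨_, hinv⟩ (Subtype.ext (PowerSeries.mul_inv_cancel _ hne))

theorem ker_constantCoeffIn_le_jacobson : RingHom.ker (constantCoeffIn A) ≤ Ideal.jacobson ⊥ :=
  fun f hf => Ideal.mem_jacobson_bot.2 fun g => isUnit_of_isUnit_constantCoeffIn <| by
    simp [(RingHom.mem_ker).1 hf]

theorem ker_constantCoeffIn_le_of_isMaximal {m : Ideal R} (hm : m.IsMaximal) :
    RingHom.ker (constantCoeffIn A) ≤ m :=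
  ker_constantCoeffIn_le_jacobson.trans (sInf_le ⟨bot_le, hm⟩)

theorem CIn_dvd_of_constantCoeffIn_eq_zero {a : A} (ha : a ≠ 0) {f : R}
    (hf : constantCoeffIn A f = 0) : CIn A a ∣ f := by
  have hmem : C (a : K)⁻¹ * (f : K⟦X⟧) ∈ R := by
    simp [mem_withConstantCoeffIn, ← coe_constantCoeffIn, hf]
  refine ⟨⟨_, hmem⟩, Subtype.ext ?_⟩
  have ha' : (a : K) ≠ 0 := fun h => ha (Subtype.ext h)
  simp [← mul_assoc, ← map_mul, mul_inv_cancel₀ ha']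

theorem comap_constantCoeffIn_span_singleton {a : A} (ha : a ≠ 0) :
    (Ideal.span {a}).comap (constantCoeffIn A) = Ideal.span {CIn A a} := by
  refine le_antisymm (fun f hf => ?_) ?_
  · obtain ⟨b, hb⟩ := Ideal.mem_span_singleton'.1 (Ideal.mem_comap.1 hf)
    have hker : constantCoeffIn A (f - CIn A b * CIn A a) = 0 := by simp [hb]
    rw [← sub_add_cancel f (CIn A b * CIn A a)]
    exact Ideal.add_mem _
      (Ideal.mem_span_singleton.2 (CIn_dvd_of_constantCoeffIn_eq_zero ha hker))
      (Ideal.mul_mem_left _ _ (Ideal.mem_span_singleton_self _))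
  · rw [Ideal.span_le, Set.singleton_subset_iff]
    simp

theorem isPrincipal_of_isMaximal_withConstantCoeffIn
    (hA : ∀ p : Ideal A, p.IsMaximal → p.IsPrincipal) (hAf : ¬IsField A)
    {m : Ideal R} (hm : m.IsMaximal) : m.IsPrincipal := by
  have hcomap : (m.map (constantCoeffIn A)).comap (constantCoeffIn A) = m := by
    rw [Ideal.comap_map_of_surjective _ constantCoeffIn_surjective, ← RingHom.ker_eq_comap_bot,
      sup_eq_left.2 (ker_constantCoeffIn_le_of_isMaximal hm)]
  have hp : (m.map (constantCoeffIn A)).IsMaximal := by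
    refine (Ideal.map_eq_top_or_isMaximal_of_surjective _ constantCoeffIn_surjective
      hm).resolve_left fun htop => hm.ne_top ?_
    rw [← hcomap, htop, Ideal.comap_top]
  obtain ⟨a, ha⟩ := (hA _ hp).principal
  have ha0 : a ≠ 0 := by
    rintro rfl
    rw [Submodule.span_zero_singleton] at ha
    exact hAf (Ring.isField_iff_maximal_bot.2 (ha ▸ hp))
  rw [← hcomap, ha, Ideal.submodule_span_eq, comap_constantCoeffIn_span_singleton ha0]
  exact ⟨⟨_, rfl⟩⟩

theorem coeff_one_mul_of_mem_ker {g : R} (hg : g ∈ RingHom.ker (constantCoeffIn A)) (t : R) :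
    coeff 1 ((g * t : R) : K⟦X⟧) = coeff 1 (g : K⟦X⟧) * constantCoeff (t : K⟦X⟧) := by
  rw [RingHom.mem_ker, ← Subtype.coe_inj, coe_constantCoeffIn] at hg
  simp [coeff_one_mul, hg]

theorem C_mul_X_mem_withConstantCoeffIn (c : K) : C c * X ∈ R := by
  simp [mem_withConstantCoeffIn]

theorem not_isPrincipal_ker_constantCoeffIn (hA : ¬IsField A) :
    ¬(RingHom.ker (constantCoeffIn A)).IsPrincipal := by
  rintro ⟨g, hg⟩
  have hgker : g ∈ RingHom.ker (constantCoeffIn A) := hg ▸ Ideal.mem_span_singleton_self g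
  have hdiv (c : K) : ∃ a ∈ A, c = coeff 1 (g : K⟦X⟧) * a := by
    have hc :
        (⟨_, C_mul_X_mem_withConstantCoeffIn c⟩ : R) ∈ RingHom.ker (constantCoeffIn A) := by
      simp [RingHom.mem_ker, ← Subtype.coe_inj]
    rw [hg, Submodule.mem_span_singleton] at hc
    obtain ⟨t, ht⟩ := hc
    refine ⟨_, t.2, ?_⟩
    have := congrArg (fun f : R => coeff 1 (f : K⟦X⟧)) ht
    simp only [smul_eq_mul, mul_comm t g] at this
    rw [coeff_one_mul_of_mem_ker hgker] at this
    simpa using this.symm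
  obtain ⟨a₁, -, h₁⟩ := hdiv 1
  have hg₁ : coeff 1 (g : K⟦X⟧) ≠ 0 := left_ne_zero_of_mul (h₁ ▸ one_ne_zero)
  refine Subring.ne_top_of_not_isField hA (eq_top_iff.2 fun b _ => ?_)
  obtain ⟨a, ha, hb⟩ := hdiv (coeff 1 (g : K⟦X⟧) * b)
  rwa [mul_left_cancel₀ hg₁ hb]

end PowerSeries

end

/-- There exists an integral domain in which every maximal ideal is
principal but which is not a principal ideal domain; equivalently (since for integral
domains PID is equivalent to every prime ideal being principal), the MIP condition is
strictly weaker than the condition that every prime ideal is principal. -/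
theorem exists_mip_not_pid : ∃ (R : Type) (_ : CommRing R) (_ : IsDomain R),
    (∀ I : Ideal R, I.IsMaximal → I.IsPrincipal) ∧
    ¬IsPrincipalIdealRing R ∧
    ¬(∀ I : Ideal R, I.IsPrime → I.IsPrincipal) := by
  let ℤ' := (Int.castRingHom ℚ).range
  let e : ℤ ≃+* ℤ' :=
    RingEquiv.ofBijective _ ⟨fun _ _ h => Int.cast_injective (congrArg Subtype.val h),
      (Int.castRingHom ℚ).rangeRestrict_surjective⟩
  have hPID : IsPrincipalIdealRing ℤ' := .of_surjective e.toRingHom e.surjective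
  have hnf : ¬IsField ℤ' := fun h => Int.not_isField (e.toMulEquiv.isField h)
  refine ⟨withConstantCoeffIn ℤ', inferInstance, inferInstance,
    fun m hm => isPrincipal_of_isMaximal_withConstantCoeffIn (fun p _ => hPID.principal p) hnf hm,
    fun h => not_isPrincipal_ker_constantCoeffIn hnf (h.principal _),
    fun h => not_isPrincipal_ker_constantCoeffIn hnf (h _ (RingHom.ker_isPrime _))⟩
end
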